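/- arXiv:2012.03258 — 8 statements merged into one kernel-verified Lean document; each statement's English description precedes it below -/
import Mathlib

section
/- Let (A, B, C) be a recollement of abelian categories. If B has enough projectives, then A has enough projectives, and an object of A is projective if and only if it is a direct summand of i^* P for some projective object P of B. Dually, if B has enough injectives, then A has enough injectives, and an object of A is injective if and only if it is a direct summand of i^! I for some injective object I of B. -/
open CategoryTheory Category Limits Abelian

universe w₁ w₂ w₃ v₁ v₂ v₃ u₁ u₂ u₃

/-- A functor between abelian categories is *exact* if it preserves short exact sequences. -/
def CategoryTheory.Functor.IsExactFunctor {A : Type u₁} {B : Type u₂}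
    [Category.{v₁} A] [Category.{v₂} B] [Abelian A] [Abelian B] (F : A ⥤ B) : Prop :=
  ∀ ⦃X₁ X₂ X₃ : A⦄ (f : X₁ ⟶ X₂) (g : X₂ ⟶ X₃) (w : f ≫ g = 0),
    (ShortComplex.mk f g w).ShortExact →
      ∃ (w' : F.map f ≫ F.map g = 0),
        (ShortComplex.mk (F.map f) (F.map g) w').ShortExact

/-- A recollement of abelian categories `(A, B, C)`: six functors
`i^* : B ⥤ A`, `i_* : A ⥤ B`, `i^! : B ⥤ A`, `j_! : C ⥤ B`, `j^* : B ⥤ C`, `j_* : C ⥤ B`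
forming two adjoint triples, with `i_*`, `j_!`, `j_*` fully faithful, and such that
`j^* X ≅ 0` iff `X ≅ i_* A₀` for some `A₀`. -/
structure Recollement (A : Type u₁) (B : Type u₂) (C : Type u₃)
    [Category.{v₁} A] [Category.{v₂} B] [Category.{v₃} C]
    [Abelian A] [Abelian B] [Abelian C] where
  /-- `i^*` -/
  iStar : B ⥤ A
  /-- `i_*` -/
  iIns : A ⥤ B
  /-- `i^!` -/
  iShriek : B ⥤ A
  /-- `j_!` -/
  jShriek : C ⥤ B
  /-- `j^*` -/
  jStar : B ⥤ C
  /-- `j_*` -/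
  jPush : C ⥤ B
  adj₁ : iStar ⊣ iIns
  adj₂ : iIns ⊣ iShriek
  adj₃ : jShriek ⊣ jStar
  adj₄ : jStar ⊣ jPush
  iIns_full : iIns.Full
  iIns_faithful : iIns.Faithful
  jShriek_full : jShriek.Full
  jShriek_faithful : jShriek.Faithful
  jPush_full : jPush.Full
  jPush_faithful : jPush.Faithful
  ker_jStar : ∀ X : B, IsZero (jStar.obj X) ↔ ∃ A₀ : A, Nonempty (X ≅ iIns.obj A₀)

lemma aux_projective_of_retract {A : Type u₁} [Category.{v₁} A] {X P : A}
    (hP : Projective P) (s : X ⟶ P) (r : P ⟶ X) (hsr : s ≫ r = 𝟙 X) : Projective X where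
  factors f g _ := by
    obtain ⟨h, hh⟩ := hP.factors (r ≫ f) g
    exact ⟨s ≫ h, by rw [assoc, hh, ← assoc, hsr, id_comp]⟩

lemma aux_injective_of_retract {A : Type u₁} [Category.{v₁} A] {X I : A}
    (hI : Injective I) (s : X ⟶ I) (r : I ⟶ X) (hsr : s ≫ r = 𝟙 X) : Injective X where
  factors f g _ := by
    obtain ⟨h, hh⟩ := hI.factors (f ≫ s) g
    exact ⟨h ≫ r, by rw [← assoc, hh, assoc, hsr, comp_id]⟩

theorem recollement_enough_projectives_and_injectives_for_A {A : Type u₁} {B : Type u₂} {C : Type u₃}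
    [Category.{v₁} A] [Category.{v₂} B] [Category.{v₃} C]
    [Abelian A] [Abelian B] [Abelian C]
    (R : Recollement A B C) :
    (EnoughProjectives B → (EnoughProjectives A ∧
      ∀ X : A, Projective X ↔ ∃ (P : B), Projective P ∧
        ∃ (s : X ⟶ R.iStar.obj P) (r : R.iStar.obj P ⟶ X), s ≫ r = 𝟙 X)) ∧
    (EnoughInjectives B → (EnoughInjectives A ∧
      ∀ X : A, Injective X ↔ ∃ (I : B), Injective I ∧
        ∃ (s : X ⟶ R.iShriek.obj I) (r : R.iShriek.obj I ⟶ X), s ≫ r = 𝟙 X)) := by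
  haveI := R.iIns_full
  haveI := R.iIns_faithful
  haveI := R.adj₁.leftAdjoint_preservesColimits
  haveI := R.adj₂.leftAdjoint_preservesColimits
  haveI := R.adj₁.rightAdjoint_preservesLimits
  haveI := R.adj₂.rightAdjoint_preservesLimits
  constructor
  · intro hB
    have hproj : ∀ P : B, Projective P → Projective (R.iStar.obj P) :=
      fun P hP => R.adj₁.map_projective P hP
    have hepi : ∀ X : A, ∃ (P : B) (_ : Projective P) (e : R.iStar.obj P ⟶ X), Epi e := by
      intro X
      refine ⟨Projective.over (R.iIns.obj X), inferInstance,
        R.iStar.map (Projective.π (R.iIns.obj X)) ≫ R.adj₁.counit.app X, ?_⟩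
      have : Epi (R.iStar.map (Projective.π (R.iIns.obj X))) :=
        R.iStar.map_epi _
      exact epi_comp _ _
    constructor
    · refine ⟨fun X => ?_⟩
      obtain ⟨P, hP, e, he⟩ := hepi X
      exact ⟨{ p := R.iStar.obj P, projective := hproj P hP, f := e, epi := he }⟩
    · intro X
      constructor
      · intro hX
        obtain ⟨P, hP, e, he⟩ := hepi X
        haveI := hX
        exact ⟨P, hP, Projective.factorThru (𝟙 X) e, e, Projective.factorThru_comp _ _⟩
      · rintro ⟨P, hP, s, r, hsr⟩
        exact aux_projective_of_retract (hproj P hP) s r hsr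
  · intro hB
    have hinj : ∀ I : B, Injective I → Injective (R.iShriek.obj I) :=
      fun I hI => R.adj₂.map_injective I hI
    have hmono : ∀ X : A, ∃ (I : B) (_ : Injective I) (m : X ⟶ R.iShriek.obj I), Mono m := by
      intro X
      refine ⟨Injective.under (R.iIns.obj X), inferInstance,
        R.adj₂.unit.app X ≫ R.iShriek.map (Injective.ι (R.iIns.obj X)), ?_⟩
      have : Mono (R.iShriek.map (Injective.ι (R.iIns.obj X))) :=
        R.iShriek.map_mono _
      exact mono_comp _ _
    constructor
    · refine ⟨fun X => ?_⟩
      obtain ⟨I, hI, m, hm⟩ := hmono X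
      exact ⟨{ J := R.iShriek.obj I, injective := hinj I hI, f := m, mono := hm }⟩
    · intro X
      constructor
      · intro hX
        obtain ⟨I, hI, m, hm⟩ := hmono X
        haveI := hX
        exact ⟨I, hI, m, Injective.factorThru (𝟙 X) m, Injective.comp_factorThru _ _⟩
      · rintro ⟨I, hI, s, r, hsr⟩
        exact aux_injective_of_retract (hinj I hI) s r hsr
end

section
/- Let (A, B, C) be a recollement of abelian categories. If B has enough projectives and j_* is exact, then C has enough projectives, and an object of C is projective if and only if it is a direct summand of j^* P for some projective object P of B. Dually, if B has enough injectives and j_! is exact, then C has enough injectives, and an object of C is injective if and only if it is a direct summand of j^* I for some injective object I of B. -/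
open CategoryTheory Category Limits Abelian

universe w₁ w₂ w₃ v₁ v₂ v₃ u₁ u₂ u₃

lemma CategoryTheory.Functor.IsExactFunctor.preservesEpimorphisms {A : Type u₁} {B : Type u₂}
    [Category.{v₁} A] [Category.{v₂} B] [Abelian A] [Abelian B] {F : A ⥤ B}
    (h : F.IsExactFunctor) : F.PreservesEpimorphisms := by
  constructor
  intro X Y g hg
  have w : kernel.ι g ≫ g = 0 := kernel.condition g
  have hse : (ShortComplex.mk (kernel.ι g) g w).ShortExact := by
    constructor
    exact ShortComplex.exact_of_f_is_kernel _ (kernelIsKernel g)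
  obtain ⟨w', hse'⟩ := h _ _ w hse
  exact hse'.epi_g

lemma CategoryTheory.Functor.IsExactFunctor.preservesMonomorphisms {A : Type u₁} {B : Type u₂}
    [Category.{v₁} A] [Category.{v₂} B] [Abelian A] [Abelian B] {F : A ⥤ B}
    (h : F.IsExactFunctor) : F.PreservesMonomorphisms := by
  constructor
  intro X Y f hf
  have w : f ≫ cokernel.π f = 0 := cokernel.condition f
  have hse : (ShortComplex.mk f (cokernel.π f) w).ShortExact := by
    constructor
    exact ShortComplex.exact_of_g_is_cokernel _ (cokernelIsCokernel f)
  obtain ⟨w', hse'⟩ := h _ _ w hse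
  exact hse'.mono_f

theorem recollement_enough_projectives_and_injectives_for_C {A : Type u₁} {B : Type u₂} {C : Type u₃}
    [Category.{v₁} A] [Category.{v₂} B] [Category.{v₃} C]
    [Abelian A] [Abelian B] [Abelian C]
    (R : Recollement A B C) :
    (EnoughProjectives B → R.jPush.IsExactFunctor → (EnoughProjectives C ∧
      ∀ Z : C, Projective Z ↔ ∃ (P : B), Projective P ∧
        ∃ (s : Z ⟶ R.jStar.obj P) (r : R.jStar.obj P ⟶ Z), s ≫ r = 𝟙 Z)) ∧
    (EnoughInjectives B → R.jShriek.IsExactFunctor → (EnoughInjectives C ∧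
      ∀ Z : C, Injective Z ↔ ∃ (I : B), Injective I ∧
        ∃ (s : Z ⟶ R.jStar.obj I) (r : R.jStar.obj I ⟶ Z), s ≫ r = 𝟙 Z)) := by
  constructor
  · intro hB hEx
    haveI := hB
    haveI := R.jPush_full
    haveI := R.jPush_faithful
    haveI : R.jPush.PreservesEpimorphisms := hEx.preservesEpimorphisms
    haveI : R.jStar.IsLeftAdjoint := ⟨_, ⟨R.adj₄⟩⟩
    -- for each Z, an epi from j^* of a projective
    have key : ∀ Z : C, ∃ (P : B), Projective P ∧ ∃ (e : R.jStar.obj P ⟶ Z), Epi e := by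
      intro Z
      refine ⟨Projective.over (R.jPush.obj Z), inferInstance,
        R.jStar.map (Projective.π (R.jPush.obj Z)) ≫ R.adj₄.counit.app Z, ?_⟩
      have : IsIso (R.adj₄.counit.app Z) := inferInstance
      exact epi_comp _ _
    constructor
    · refine ⟨fun Z => ?_⟩
      obtain ⟨P, hP, e, he⟩ := key Z
      exact ⟨{ p := R.jStar.obj P, projective := R.adj₄.map_projective P hP,
               f := e, epi := he }⟩
    · intro Z
      constructor
      · intro hZ
        obtain ⟨P, hP, e, he⟩ := key Z
        haveI := hZ
        haveI := he
        exact ⟨P, hP, Projective.factorThru (𝟙 Z) e, e, Projective.factorThru_comp _ _⟩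
      · rintro ⟨P, hP, s, r, hsr⟩
        haveI : Projective (R.jStar.obj P) := R.adj₄.map_projective P hP
        constructor
        intro E X f e he
        exact ⟨s ≫ Projective.factorThru (r ≫ f) e, by
          rw [assoc, Projective.factorThru_comp, ← assoc, hsr, id_comp]⟩
  · intro hB hEx
    haveI := hB
    haveI := R.jShriek_full
    haveI := R.jShriek_faithful
    haveI : R.jShriek.PreservesMonomorphisms := hEx.preservesMonomorphisms
    haveI : R.jStar.IsRightAdjoint := ⟨_, ⟨R.adj₃⟩⟩
    have key : ∀ Z : C, ∃ (I : B), Injective I ∧ ∃ (m : Z ⟶ R.jStar.obj I), Mono m := by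
      intro Z
      refine ⟨Injective.under (R.jShriek.obj Z), inferInstance,
        R.adj₃.unit.app Z ≫ R.jStar.map (Injective.ι (R.jShriek.obj Z)), ?_⟩
      have : IsIso (R.adj₃.unit.app Z) := inferInstance
      exact mono_comp _ _
    constructor
    · refine ⟨fun Z => ?_⟩
      obtain ⟨I, hI, m, hm⟩ := key Z
      exact ⟨{ J := R.jStar.obj I, injective := R.adj₃.map_injective I hI,
               f := m, mono := hm }⟩
    · intro Z
      constructor
      · intro hZ
        obtain ⟨I, hI, m, hm⟩ := key Z
        haveI := hZ
        haveI := hm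
        obtain ⟨r, hr⟩ := hZ.factors (𝟙 Z) m
        exact ⟨I, hI, m, r, hr⟩
      · rintro ⟨I, hI, s, r, hsr⟩
        haveI : Injective (R.jStar.obj I) := R.adj₃.map_injective I hI
        constructor
        intro X Y g f hf
        obtain ⟨h, hh⟩ := Injective.factors (g ≫ s) f
        exact ⟨h ≫ r, by rw [← assoc, hh, assoc, hsr, comp_id]⟩
end

section
/- Let (A, B, C) be a recollement of abelian categories. If i^* is exact, then j_! is exact; and if i^! is exact, then j_* is exact. -/
open CategoryTheory Category Limits Abelian

universe w₁ w₂ w₃ v₁ v₂ v₃ u₁ u₂ u₃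

namespace RecAux

variable {A : Type u₁} {B : Type u₂} [Category.{v₁} A] [Category.{v₂} B]
  [Abelian A] [Abelian B]

theorem mono_map_of_exact {F : A ⥤ B} (hF : F.IsExactFunctor)
    {P Q : A} (m : P ⟶ Q) [Mono m] : Mono (F.map m) := by
  obtain ⟨w', h⟩ := hF m (cokernel.π m) (cokernel.condition m)
    { exact := ShortComplex.exact_of_g_is_cokernel _ (cokernelIsCokernel m) }
  exact h.mono_f

theorem epi_map_of_exact {F : A ⥤ B} (hF : F.IsExactFunctor)
    {P Q : A} (m : P ⟶ Q) [Epi m] : Epi (F.map m) := by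
  obtain ⟨w', h⟩ := hF (kernel.ι m) m (kernel.condition m)
    { exact := ShortComplex.exact_of_f_is_kernel _ (kernelIsKernel m) }
  exact h.epi_g

theorem isZero_of_mono_zero_tgt {X Y : A} (m : X ⟶ Y) [Mono m] (hY : IsZero Y) : IsZero X := by
  rw [IsZero.iff_id_eq_zero, ← cancel_mono m, hY.eq_of_tgt (𝟙 X ≫ m) (0 ≫ m)]

theorem isZero_of_epi_zero_src {X Y : A} (m : X ⟶ Y) [Epi m] (hX : IsZero X) : IsZero Y := by
  rw [IsZero.iff_id_eq_zero, ← cancel_epi m, hX.eq_of_src (m ≫ 𝟙 Y) (m ≫ 0)]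

theorem isZero_kernel_of_mono {X Y : A} (m : X ⟶ Y) [Mono m] : IsZero (kernel m) := by
  rw [IsZero.iff_id_eq_zero, ← cancel_mono (kernel.ι m), id_comp, zero_comp,
    ← cancel_mono m, kernel.condition, zero_comp]

theorem isZero_cokernel_of_epi {X Y : A} (m : X ⟶ Y) [Epi m] : IsZero (cokernel m) := by
  rw [IsZero.iff_id_eq_zero, ← cancel_epi (cokernel.π m), comp_id, comp_zero,
    ← cancel_epi m, cokernel.condition, comp_zero]

theorem isZero_obj_of_isZero (F : A ⥤ B) [F.PreservesZeroMorphisms] {X : A}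
    (hX : IsZero X) : IsZero (F.obj X) := by
  rw [IsZero.iff_id_eq_zero, ← F.map_id, hX.eq_of_src (𝟙 X) 0, F.map_zero]

end RecAux

open RecAux

theorem recollement_exactness_transfer {A : Type u₁} {B : Type u₂} {C : Type u₃}
    [Category.{v₁} A] [Category.{v₂} B] [Category.{v₃} C]
    [Abelian A] [Abelian B] [Abelian C]
    (R : Recollement A B C) :
    (R.iStar.IsExactFunctor → R.jShriek.IsExactFunctor) ∧
    (R.iShriek.IsExactFunctor → R.jPush.IsExactFunctor) := by
  haveI := R.iIns_full; haveI := R.iIns_faithful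
  haveI := R.jShriek_full; haveI := R.jShriek_faithful
  haveI := R.jPush_full; haveI := R.jPush_faithful
  haveI : R.jShriek.IsLeftAdjoint := ⟨_, ⟨R.adj₃⟩⟩
  haveI : R.jPush.IsRightAdjoint := ⟨_, ⟨R.adj₄⟩⟩
  haveI : R.jStar.IsLeftAdjoint := ⟨_, ⟨R.adj₄⟩⟩
  haveI : R.jStar.IsRightAdjoint := ⟨_, ⟨R.adj₃⟩⟩
  haveI : PreservesColimitsOfSize.{v₃, v₃} R.jShriek := R.adj₃.leftAdjoint_preservesColimits
  haveI : PreservesLimitsOfSize.{v₃, v₃} R.jPush := R.adj₄.rightAdjoint_preservesLimits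
  haveI : PreservesLimitsOfSize.{v₂, v₂} R.jStar := R.adj₃.rightAdjoint_preservesLimits
  haveI : PreservesColimitsOfSize.{v₂, v₂} R.jStar := R.adj₄.leftAdjoint_preservesColimits
  constructor
  · -- i^* exact ⇒ j_! exact
    intro hi
    -- i^* (j_! X) is zero
    have hzero : ∀ X : C, IsZero (R.iStar.obj (R.jShriek.obj X)) := by
      intro X
      have hz : IsZero (R.jStar.obj (R.iIns.obj (R.iStar.obj (R.jShriek.obj X)))) :=
        (R.ker_jStar _).2 ⟨_, ⟨Iso.refl _⟩⟩
      rw [IsZero.iff_id_eq_zero]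
      exact ((R.adj₁.homEquiv (R.jShriek.obj X) _).trans
        (R.adj₃.homEquiv X _)).injective (hz.eq_of_tgt _ _)
    -- j_! preserves monos
    haveI hjm : R.jShriek.PreservesMonomorphisms := by
      constructor
      intro X Y f hf
      haveI := hf
      have hmono2 : Mono ((R.jShriek ⋙ R.jStar).map f) := by
        rw [show (R.jShriek ⋙ R.jStar).map f
            = inv (R.adj₃.unit.app X) ≫ f ≫ R.adj₃.unit.app Y from by
          rw [← cancel_epi (R.adj₃.unit.app X), ← R.adj₃.unit.naturality f]; simp]
        infer_instance
      have hk0 : IsZero (kernel (R.jStar.map (R.jShriek.map f))) :=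
        RecAux.isZero_kernel_of_mono ((R.jShriek ⋙ R.jStar).map f)
      have hKz : IsZero (R.jStar.obj (kernel (R.jShriek.map f))) :=
        hk0.of_iso (asIso (kernelComparison (R.jShriek.map f) R.jStar))
      obtain ⟨A₀, ⟨eK⟩⟩ := (R.ker_jStar _).1 hKz
      haveI hmι : Mono (R.iStar.map (kernel.ι (R.jShriek.map f))) := mono_map_of_exact hi _
      have hKi : IsZero (R.iStar.obj (kernel (R.jShriek.map f))) :=
        isZero_of_mono_zero_tgt (R.iStar.map (kernel.ι (R.jShriek.map f))) (hzero X)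
      have hA : IsZero A₀ :=
        hKi.of_iso ((asIso (R.adj₁.counit.app A₀)).symm ≪≫ R.iStar.mapIso eK.symm)
      have hK : IsZero (kernel (R.jShriek.map f)) :=
        (isZero_obj_of_isZero R.iIns hA).of_iso eK
      exact Preadditive.mono_of_isZero_kernel _ hK
    haveI : R.jShriek.PreservesHomology :=
      Functor.preservesHomology_of_preservesMonos_and_cokernels _
    intro X₁ X₂ X₃ f g w hS
    haveI := hS.mono_f
    haveI := hS.epi_g
    exact ⟨by rw [← R.jShriek.map_comp, w, R.jShriek.map_zero],
      hS.map R.jShriek⟩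
  · -- i^! exact ⇒ j_* exact
    intro hi
    -- i^! (j_* X) is zero
    have hzero : ∀ X : C, IsZero (R.iShriek.obj (R.jPush.obj X)) := by
      intro X
      have hz : IsZero (R.jStar.obj (R.iIns.obj (R.iShriek.obj (R.jPush.obj X)))) :=
        (R.ker_jStar _).2 ⟨_, ⟨Iso.refl _⟩⟩
      rw [IsZero.iff_id_eq_zero]
      exact ((R.adj₂.homEquiv _ (R.jPush.obj X)).symm.trans
        (R.adj₄.homEquiv _ X).symm).injective (hz.eq_of_src _ _)
    -- j_* preserves epis
    haveI hje : R.jPush.PreservesEpimorphisms := by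
      constructor
      intro X Y f hf
      haveI := hf
      have hepi2 : Epi ((R.jPush ⋙ R.jStar).map f) := by
        rw [show (R.jPush ⋙ R.jStar).map f
            = R.adj₄.counit.app X ≫ f ≫ inv (R.adj₄.counit.app Y) from by
          rw [← cancel_mono (R.adj₄.counit.app Y)]
          simp [R.adj₄.counit.naturality f]]
        infer_instance
      have hc0 : IsZero (cokernel (R.jStar.map (R.jPush.map f))) :=
        RecAux.isZero_cokernel_of_epi ((R.jPush ⋙ R.jStar).map f)
      have hQz : IsZero (R.jStar.obj (cokernel (R.jPush.map f))) :=
        hc0.of_iso (asIso (cokernelComparison (R.jPush.map f) R.jStar)).symm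
      obtain ⟨A₀, ⟨eQ⟩⟩ := (R.ker_jStar _).1 hQz
      haveI hmπ : Epi (R.iShriek.map (cokernel.π (R.jPush.map f))) := epi_map_of_exact hi _
      have hQi : IsZero (R.iShriek.obj (cokernel (R.jPush.map f))) :=
        isZero_of_epi_zero_src (R.iShriek.map (cokernel.π (R.jPush.map f))) (hzero Y)
      have hA : IsZero A₀ :=
        hQi.of_iso ((asIso (R.adj₂.unit.app A₀)) ≪≫ R.iShriek.mapIso eQ.symm)
      have hQ : IsZero (cokernel (R.jPush.map f)) :=
        (isZero_obj_of_isZero R.iIns hA).of_iso eQ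
      exact Preadditive.epi_of_isZero_cokernel _ hQ
    haveI : R.jPush.PreservesHomology :=
      Functor.preservesHomology_of_preservesEpis_and_kernels _
    intro X₁ X₂ X₃ f g w hS
    haveI := hS.mono_f
    haveI := hS.epi_g
    exact ⟨by rw [← R.jPush.map_comp, w, R.jPush.map_zero],
      hS.map R.jPush⟩
end

section
/- Let (A, B, C) be a recollement of abelian categories. If i^! is exact, then for each object X of B the sequence 0 → i_* i^! X → X → j_* j^* X → 0 is a short exact sequence in B, where the map i_* i^! X → X is the counit of the adjunction i_* ⊣ i^! and the map X → j_* j^* X is the unit of the adjunction j^* ⊣ j_*. -/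
open CategoryTheory Category Limits Abelian

universe w₁ w₂ w₃ v₁ v₂ v₃ u₁ u₂ u₃

/-- In an abelian category, for an epimorphism `g`, the complex `ker g → X → Y` is
short exact. -/
lemma aux_kernel_shortExact {B : Type u₂} [Category.{v₂} B] [Abelian B]
    {X Y : B} (g : X ⟶ Y) [Epi g] :
    (ShortComplex.mk (kernel.ι g) g (kernel.condition g)).ShortExact where
  exact := ShortComplex.exact_of_f_is_kernel _ (kernelIsKernel g)

theorem recollement_ses_counit_unit_of_iShriek_exact {A : Type u₁} {B : Type u₂} {C : Type u₃}
    [Category.{v₁} A] [Category.{v₂} B] [Category.{v₃} C]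
    [Abelian A] [Abelian B] [Abelian C]
    (R : Recollement A B C) (hex : R.iShriek.IsExactFunctor) (X : B) :
    ∃ (w : R.adj₂.counit.app X ≫ R.adj₄.unit.app X = 0),
      (ShortComplex.mk (R.adj₂.counit.app X) (R.adj₄.unit.app X) w).ShortExact := by
  
  haveI := R.iIns_full
  haveI := R.iIns_faithful
  haveI := R.jPush_full
  haveI := R.jPush_faithful
  haveI := R.adj₂.isLeftAdjoint
  haveI := R.adj₂.isRightAdjoint
  haveI := R.adj₃.isRightAdjoint
  haveI := R.adj₄.isLeftAdjoint
  haveI := R.adj₄.isRightAdjoint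
  set ε := R.adj₂.counit.app X with hεdef
  set η := R.adj₄.unit.app X with hηdef
  -- `j^*` kills the image of `i_*`
  have hz1 : ∀ A₀ : A, IsZero (R.jStar.obj (R.iIns.obj A₀)) :=
    fun A₀ => (R.ker_jStar _).mpr ⟨A₀, ⟨Iso.refl _⟩⟩
  -- the composition vanishes
  have w : ε ≫ η = 0 := by
    apply (R.adj₄.homEquiv _ _).symm.injective
    exact (hz1 _).eq_of_src _ _
  -- `i^! j_* ≅ 0`
  have hz2 : ∀ Yc : C, IsZero (R.iShriek.obj (R.jPush.obj Yc)) := by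
    intro Yc
    rw [IsZero.iff_id_eq_zero]
    have hc : R.adj₂.counit.app (R.jPush.obj Yc) = 0 := by
      apply (R.adj₄.homEquiv _ _).symm.injective
      exact (hz1 _).eq_of_src _ _
    have h1 : (R.adj₂.homEquiv _ _) (R.adj₂.counit.app (R.jPush.obj Yc)) = 𝟙 _ := by
      rw [Adjunction.homEquiv_unit]
      exact R.adj₂.right_triangle_components _
    rw [← h1, hc, Adjunction.homEquiv_unit, Functor.map_zero, comp_zero]
  -- `j^* η` is an isomorphism
  haveI hjη : IsIso (R.jStar.map η) := by
    haveI : IsIso (R.jStar.map η ≫ R.adj₄.counit.app (R.jStar.obj X)) := by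
      rw [R.adj₄.left_triangle_components X]; exact IsIso.id _
    exact IsIso.of_isIso_comp_right (R.jStar.map η) (R.adj₄.counit.app (R.jStar.obj X))
  -- `i^! η = 0`
  have hη0 : R.iShriek.map η = 0 := (hz2 _).eq_of_tgt _ _
  have hηepi : Epi (R.iShriek.map η) :=
    ⟨fun g h _ => (hz2 (R.jStar.obj X)).eq_of_src g h⟩
  -- an object `Z` of `B` with `j^* Z ≅ 0` and `i^! Z ≅ 0` is zero
  have hzero : ∀ Z : B, IsZero (R.jStar.obj Z) → IsZero (R.iShriek.obj Z) → IsZero Z := by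
    intro Z h₁ h₂
    obtain ⟨A₀, ⟨e⟩⟩ := (R.ker_jStar _).mp h₁
    have h₃ : IsZero (R.iShriek.obj (R.iIns.obj A₀)) :=
      h₂.of_iso (R.iShriek.mapIso e).symm
    have h₄ : IsZero A₀ := h₃.of_iso (asIso (R.adj₂.unit.app A₀))
    exact (R.iIns.map_isZero h₄).of_iso e
  -- `η` is an epimorphism
  haveI hηE : Epi η := by
    have hπ0 : R.jStar.map (cokernel.π η) = 0 := by
      rw [← cancel_epi (R.jStar.map η), ← Functor.map_comp, cokernel.condition,
        Functor.map_zero, comp_zero]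
    have hzQj : IsZero (R.jStar.obj (cokernel η)) := IsZero.of_epi_eq_zero _ hπ0
    obtain ⟨w', hses'⟩ := hex (kernel.ι (cokernel.π η)) (cokernel.π η) (kernel.condition _)
      (aux_kernel_shortExact _)
    haveI := hses'.epi_g
    have hQi0 : R.iShriek.map (cokernel.π η) = 0 := by
      rw [← cancel_epi (R.iShriek.map η), ← Functor.map_comp, cokernel.condition,
        Functor.map_zero, comp_zero]
    have hzQi : IsZero (R.iShriek.obj (cokernel η)) := IsZero.of_epi_eq_zero _ hQi0
    have hQz : IsZero (cokernel η) := hzero _ hzQj hzQi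
    exact Abelian.epi_of_cokernel_π_eq_zero _ (hQz.eq_of_tgt _ _)
  -- the kernel of `η` is in the image of `i_*`
  have hzKj : IsZero (R.jStar.obj (kernel η)) := by
    have hk0 : R.jStar.map (kernel.ι η) = 0 := by
      rw [← cancel_mono (R.jStar.map η), ← Functor.map_comp, kernel.condition,
        Functor.map_zero, zero_comp]
    exact IsZero.of_mono_eq_zero _ hk0
  obtain ⟨A₁, ⟨e₁⟩⟩ := (R.ker_jStar _).mp hzKj
  -- the comparison map `φ : i_* i^! X ⟶ ker η`
  set φ := kernel.lift η ε w with hφdef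
  have hφk : φ ≫ kernel.ι η = ε := kernel.lift_ι η ε w
  -- the short complex `(ker η, X, j_* j^* X)` is short exact
  have hses2 := aux_kernel_shortExact η
  obtain ⟨w2, hses2'⟩ := hex (kernel.ι η) η (kernel.condition η) hses2
  -- `i^!` of `kernel.ι η` is an isomorphism
  haveI : Epi (R.iShriek.map (kernel.ι η)) := hses2'.exact.epi_f hη0
  haveI : IsIso (R.iShriek.map (kernel.ι η)) := isIso_of_mono_of_epi _
  -- `i^! ε` is an isomorphism
  haveI : IsIso (R.iShriek.map ε) := by
    haveI : IsIso (R.adj₂.unit.app (R.iShriek.obj X) ≫ R.iShriek.map ε) := by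
      rw [R.adj₂.right_triangle_components X]; exact IsIso.id _
    exact IsIso.of_isIso_comp_left (R.adj₂.unit.app (R.iShriek.obj X)) (R.iShriek.map ε)
  -- hence `i^! φ` is an isomorphism
  haveI : IsIso (R.iShriek.map φ) := by
    haveI : IsIso (R.iShriek.map φ ≫ R.iShriek.map (kernel.ι η)) := by
      rw [← Functor.map_comp, hφk]; infer_instance
    exact IsIso.of_isIso_comp_right (R.iShriek.map φ) (R.iShriek.map (kernel.ι η))
  -- hence `φ` is an isomorphism, using full faithfulness of `i_*`
  haveI : IsIso φ := by
    set ψ₀ := R.iIns.preimage (φ ≫ e₁.hom) with hψ₀def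
    have hψ₀ : R.iIns.map ψ₀ = φ ≫ e₁.hom := R.iIns.map_preimage _
    haveI : IsIso (R.iShriek.map (R.iIns.map ψ₀)) := by
      rw [hψ₀, Functor.map_comp]; infer_instance
    haveI : IsIso (ψ₀ ≫ R.adj₂.unit.app A₁) := by
      rw [← R.adj₂.unit_naturality ψ₀]; infer_instance
    haveI : IsIso ψ₀ := IsIso.of_isIso_comp_right ψ₀ (R.adj₂.unit.app A₁)
    have hφ' : φ = R.iIns.map ψ₀ ≫ e₁.inv := by rw [hψ₀, assoc, e₁.hom_inv_id, comp_id]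
    rw [hφ']; infer_instance
  refine ⟨w, ?_⟩
  exact ShortComplex.shortExact_of_iso
    (ShortComplex.isoMk (S₁ := ShortComplex.mk (kernel.ι η) η (kernel.condition η))
      (S₂ := ShortComplex.mk ε η w) (asIso φ).symm (Iso.refl _) (Iso.refl _)
      (by simp [← hφk]) (by simp)) hses2
end

section
/- Let (A, B, C) be a recollement of abelian categories. If i^* is exact, then for each object X of B the sequence 0 → j_! j^* X → X → i_* i^* X → 0 is a short exact sequence in B, where the map j_! j^* X → X is the counit of the adjunction j_! ⊣ j^* and the map X → i_* i^* X is the unit of the adjunction i^* ⊣ i_*. -/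
open CategoryTheory Category Limits Abelian

universe w₁ w₂ w₃ v₁ v₂ v₃ u₁ u₂ u₃

section Aux

variable {A : Type u₁} {B : Type u₂} {C : Type u₃}
    [Category.{v₁} A] [Category.{v₂} B] [Category.{v₃} C]
    [Abelian A] [Abelian B] [Abelian C] (R : Recollement A B C)

/-- `j^* i_* = 0`. -/
lemma Recollement.jStar_iIns_isZero (A₀ : A) : IsZero (R.jStar.obj (R.iIns.obj A₀)) :=
  (R.ker_jStar _).mpr ⟨A₀, ⟨Iso.refl _⟩⟩

/-- `i^* j_! = 0`. -/
lemma Recollement.iStar_jShriek_isZero (c : C) : IsZero (R.iStar.obj (R.jShriek.obj c)) := by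
  rw [IsZero.iff_id_eq_zero]
  apply (R.adj₁.homEquiv _ _).injective
  apply (R.adj₃.homEquiv _ _).injective
  exact (R.jStar_iIns_isZero _).eq_of_tgt _ _

end Aux

theorem recollement_ses_counit_unit_of_iStar_exact {A : Type u₁} {B : Type u₂} {C : Type u₃}
    [Category.{v₁} A] [Category.{v₂} B] [Category.{v₃} C]
    [Abelian A] [Abelian B] [Abelian C]
    (R : Recollement A B C) (hex : R.iStar.IsExactFunctor) (X : B) :
    ∃ (w : R.adj₃.counit.app X ≫ R.adj₁.unit.app X = 0),
      (ShortComplex.mk (R.adj₃.counit.app X) (R.adj₁.unit.app X) w).ShortExact := by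
  haveI := R.iIns_full
  haveI := R.iIns_faithful
  haveI := R.jShriek_full
  haveI := R.jShriek_faithful
  haveI : R.jStar.IsLeftAdjoint := R.adj₄.isLeftAdjoint
  haveI : R.jStar.IsRightAdjoint := R.adj₃.isRightAdjoint
  haveI : R.jStar.PreservesMonomorphisms :=
    CategoryTheory.Functor.preservesMonomorphisms_of_adjunction R.adj₃
  haveI : R.jStar.PreservesEpimorphisms :=
    CategoryTheory.Functor.preservesEpimorphisms_of_adjunction R.adj₄
  set ε := R.adj₃.counit.app X with hε
  set η := R.adj₁.unit.app X with hη
  -- the composition is zero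
  have w : ε ≫ η = 0 := by
    apply (R.adj₁.homEquiv _ _).symm.injective
    exact (R.iStar_jShriek_isZero _).eq_of_src _ _
  -- `j^* ε` is an isomorphism
  haveI hiso : IsIso (R.jStar.map ε) := by
    rw [hε]; infer_instance
  -- the kernel of ε is killed by j^*
  have hKmap : R.jStar.map (kernel.ι ε) = 0 := by
    have : R.jStar.map (kernel.ι ε) ≫ R.jStar.map ε = 0 := by
      rw [← R.jStar.map_comp, kernel.condition, R.jStar.map_zero]
    rwa [← cancel_mono (R.jStar.map ε), zero_comp]
  have hKz : IsZero (R.jStar.obj (kernel ε)) :=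
    IsZero.of_mono_eq_zero _ hKmap
  obtain ⟨A₀, ⟨φK⟩⟩ := (R.ker_jStar _).mp hKz
  -- short exact sequence on the kernel, to which we apply exactness of i^*
  have sesK : (ShortComplex.mk (kernel.ι ε) (cokernel.π (kernel.ι ε))
      (cokernel.condition _)).ShortExact := by
    refine ShortComplex.ShortExact.mk' ?_ ?_ ?_
    · exact ShortComplex.exact_of_g_is_cokernel _ (cokernelIsCokernel _)
    · exact inferInstance
    · exact inferInstance
  obtain ⟨wK, sesK'⟩ := hex _ _ _ sesK
  haveI := sesK'.mono_f
  have hiKz : IsZero (R.iStar.obj (kernel ε)) :=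
    IsZero.of_mono_eq_zero (R.iStar.map (kernel.ι ε))
      ((R.iStar_jShriek_isZero _).eq_of_tgt _ _)
  -- hence the kernel of ε is zero, so ε is mono
  have hKzero : IsZero (kernel ε) := by
    rw [IsZero.iff_id_eq_zero]
    haveI : Subsingleton (R.iStar.obj (kernel ε) ⟶ A₀) := ⟨hiKz.eq_of_src⟩
    haveI : Subsingleton (kernel ε ⟶ R.iIns.obj A₀) :=
      Equiv.subsingleton ((R.adj₁.homEquiv _ _).symm)
    have hφ : φK.hom = 0 := Subsingleton.elim _ _
    rw [← φK.hom_inv_id, hφ, zero_comp]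
  haveI : Mono ε := Preadditive.mono_of_isZero_kernel _ hKzero
  -- the cokernel of ε is killed by j^*
  set π := cokernel.π ε with hπ
  have hQmap : R.jStar.map π = 0 := by
    have : R.jStar.map ε ≫ R.jStar.map π = 0 := by
      rw [← R.jStar.map_comp, cokernel.condition, R.jStar.map_zero]
    rwa [← cancel_epi (R.jStar.map ε), comp_zero]
  have hQz : IsZero (R.jStar.obj (cokernel ε)) :=
    IsZero.of_epi_eq_zero _ hQmap
  obtain ⟨A₁, ⟨φQ⟩⟩ := (R.ker_jStar _).mp hQz
  -- the unit is invertible on the cokernel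
  haveI : IsIso (R.adj₁.unit.app (cokernel ε)) :=
    R.adj₁.isIso_unit_app_of_iso φQ
  -- the short exact sequence (ε, π), to which we apply exactness of i^*
  have sesE : (ShortComplex.mk ε π (cokernel.condition _)).ShortExact := by
    refine ShortComplex.ShortExact.mk' ?_ ?_ ?_
    · exact ShortComplex.exact_of_g_is_cokernel _ (cokernelIsCokernel _)
    · exact inferInstance
    · exact inferInstance
  obtain ⟨wE, sesE'⟩ := hex _ _ _ sesE
  haveI := sesE'.epi_g
  -- `i^* π` is an isomorphism
  have hiε : R.iStar.map ε = 0 := (R.iStar_jShriek_isZero _).eq_of_src _ _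
  haveI : Mono (R.iStar.map π) := sesE'.exact.mono_g hiε
  haveI : IsIso (R.iStar.map π) := isIso_of_mono_of_epi _
  -- the comparison map u
  set u : cokernel ε ⟶ R.iIns.obj (R.iStar.obj X) :=
    (R.adj₁.homEquiv _ _) (inv (R.iStar.map π)) with hu
  have hufact : π ≫ u = η := by
    rw [hu, ← R.adj₁.homEquiv_naturality_left, IsIso.hom_inv_id]
    exact R.adj₁.homEquiv_id X
  haveI : IsIso u := by
    have : u = R.adj₁.unit.app (cokernel ε) ≫ R.iIns.map (inv (R.iStar.map π)) :=
      R.adj₁.homEquiv_unit _ _ _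
    rw [this]
    infer_instance
  -- conclude by transporting the short exact sequence (ε, π) along u
  refine ⟨w, ShortComplex.shortExact_of_iso ?_ sesE⟩
  exact ShortComplex.isoMk (Iso.refl _) (Iso.refl _) (asIso u)
    (by simp) (by simpa using hufact.symm)
end

section
/- Let (A, B, C) be a recollement of abelian categories, let (T1, F1) and (T2, F2) be cotorsion pairs in A and C respectively, and let (T, F) be the glued pair. If i^! is exact, then every object M of B admits a short exact sequence 0 → F → T → M → 0 in B with T ∈ T and F ∈ F. -/
open CategoryTheory Category Limits Abelian

universe w₁ w₂ w₃ v₁ v₂ v₃ u₁ u₂ u₃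

/-- `(T, F)` is a cotorsion pair in the abelian category `D`. -/
structure IsCotorsionPair (D : Type u₁) [Category.{v₁} D] [Abelian D] [HasExt.{w₁} D]
    (T F : Set D) : Prop where
  isoClosed_T : ∀ {X Y : D}, (X ≅ Y) → X ∈ T → Y ∈ T
  isoClosed_F : ∀ {X Y : D}, (X ≅ Y) → X ∈ F → Y ∈ F
  ext_zero : ∀ {X Y : D}, X ∈ T → Y ∈ F → ∀ e : Abelian.Ext X Y 1, e = 0
  exists_seq_left : ∀ M : D, ∃ (X Y : D) (f : X ⟶ Y) (g : Y ⟶ M) (w : f ≫ g = 0),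
    X ∈ F ∧ Y ∈ T ∧ (ShortComplex.mk f g w).ShortExact
  exists_seq_right : ∀ M : D, ∃ (Y Z : D) (f : M ⟶ Y) (g : Y ⟶ Z) (w : f ≫ g = 0),
    Y ∈ F ∧ Z ∈ T ∧ (ShortComplex.mk f g w).ShortExact

/-! ### Auxiliary general lemmas -/

namespace GluedAux

universe v u v' u'

section General

variable {D : Type u} [Category.{v} D] [Abelian D]

lemma isZero_of_epi_zero {X Y : D} (f : X ⟶ Y) [Epi f] (hf : f = 0) : IsZero Y := by
  rw [IsZero.iff_id_eq_zero, ← cancel_epi f, hf, comp_id, zero_comp]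

lemma isZero_of_epi {X Y : D} (f : X ⟶ Y) [Epi f] (hX : IsZero X) : IsZero Y :=
  isZero_of_epi_zero f (hX.eq_of_src f 0)

lemma isIso_cofork_π_of_zero {X Y : D} {f : X ⟶ Y} (hf : f = 0)
    (c : CokernelCofork f) (hc : IsColimit c) : IsIso (Cofork.π c) := by
  have h0 : f ≫ 𝟙 Y = 0 ≫ 𝟙 Y := by rw [hf]
  let σ : c.pt ⟶ Y := Cofork.IsColimit.desc hc (𝟙 Y) h0
  have h1 : Cofork.π c ≫ σ = 𝟙 Y := Cofork.IsColimit.π_desc' hc (𝟙 Y) h0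
  have h2 : σ ≫ Cofork.π c = 𝟙 c.pt := by
    apply Cofork.IsColimit.hom_ext hc
    rw [← assoc, h1]
    simp
  exact ⟨σ, h1, h2⟩

lemma isIso_fst_of_isIso {P X Y Z : D} {p₁ : P ⟶ X} {p₂ : P ⟶ Y} {g : X ⟶ Z} {h : Y ⟶ Z}
    (sq : IsPullback p₁ p₂ g h) [IsIso h] : IsIso p₁ := by
  let t : X ⟶ P := sq.lift (𝟙 X) (g ≫ inv h) (by simp)
  refine ⟨t, ?_, sq.lift_fst _ _ _⟩
  apply sq.hom_ext
  · rw [assoc, sq.lift_fst, comp_id, id_comp]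
  · rw [assoc, sq.lift_snd, id_comp, ← assoc, sq.w, assoc, IsIso.hom_inv_id, comp_id]

/-- Pulling back a short exact sequence along a morphism gives a short exact sequence. -/
lemma pullback_shortExact {A₀ X Z M P : D} {f : A₀ ⟶ X} {g : X ⟶ Z} {w : f ≫ g = 0}
    (hS : (ShortComplex.mk f g w).ShortExact) {h : M ⟶ Z} {p₁ : P ⟶ X} {p₂ : P ⟶ M}
    (sq : IsPullback p₁ p₂ g h) :
    ∃ (l : A₀ ⟶ P) (hl : l ≫ p₁ = f) (w' : l ≫ p₂ = 0),
      (ShortComplex.mk l p₂ w').ShortExact := by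
  have hmf : Mono f := hS.mono_f
  have hge : Epi g := hS.epi_g
  have hl0 : f ≫ g = 0 ≫ h := by rw [w, zero_comp]
  refine ⟨sq.lift f 0 hl0, sq.lift_fst _ _ _, sq.lift_snd _ _ _, ?_⟩
  set l : A₀ ⟶ P := sq.lift f 0 hl0 with hldef
  have hmono : Mono l := mono_of_mono_fac (sq.lift_fst f 0 hl0)
  have hepi : Epi p₂ := Abelian.epi_snd_of_isLimit _ _ sq.isLimit
  apply ShortComplex.ShortExact.mk' _ hmono hepi
  apply ShortComplex.exact_of_f_is_kernel
  apply KernelFork.IsLimit.ofι' l (sq.lift_snd f 0 hl0)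
  intro W x hx
  refine ⟨hS.exact.lift (x ≫ p₁) ?_, ?_⟩
  · rw [assoc, sq.w, ← assoc, hx, zero_comp]
  · apply sq.hom_ext
    · rw [assoc, sq.lift_fst]
      exact hS.exact.lift_f _ _
    · rw [assoc, sq.lift_snd, comp_zero, hx]

lemma shortExact_kernel {X Y : D} (f : X ⟶ Y) [Epi f] :
    (ShortComplex.mk (kernel.ι f) f (kernel.condition f)).ShortExact :=
  ShortComplex.ShortExact.mk'
    (ShortComplex.exact_of_f_is_kernel _ (kernelIsKernel f)) inferInstance inferInstance

end General

lemma _root_.CategoryTheory.Functor.IsExactFunctor.preserves_epi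
    {D : Type u} {E : Type u'} [Category.{v} D] [Category.{v'} E] [Abelian D] [Abelian E]
    {F : D ⥤ E} (hF : F.IsExactFunctor) {X Y : D} (f : X ⟶ Y) [Epi f] : Epi (F.map f) := by
  obtain ⟨w', h⟩ := hF (kernel.ι f) f (kernel.condition f) (shortExact_kernel f)
  exact h.epi_g

/-! ### Lemmas about recollements -/

section Recollement

variable {A : Type u₁} {B : Type u₂} {C : Type u₃}
    [Category.{v₁} A] [Category.{v₂} B] [Category.{v₃} C]
    [Abelian A] [Abelian B] [Abelian C] (R : Recollement A B C)

lemma jStar_iIns_isZero (a : A) : IsZero (R.jStar.obj (R.iIns.obj a)) :=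
  (R.ker_jStar _).mpr ⟨a, ⟨Iso.refl _⟩⟩

lemma iStar_jShriek_isZero (X : C) : IsZero (R.iStar.obj (R.jShriek.obj X)) := by
  rw [IsZero.iff_id_eq_zero]
  apply (R.adj₁.homEquiv _ _).injective
  apply (R.adj₃.homEquiv _ _).injective
  exact (jStar_iIns_isZero R _).eq_of_tgt _ _

lemma iShriek_jPush_isZero (X : C) : IsZero (R.iShriek.obj (R.jPush.obj X)) := by
  rw [IsZero.iff_id_eq_zero]
  apply (R.adj₂.homEquiv _ _).symm.injective
  apply (R.adj₄.homEquiv _ _).symm.injective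
  exact (jStar_iIns_isZero R _).eq_of_src _ _

lemma counit₁_app_isIso (a : A) : IsIso (R.adj₁.counit.app a) := by
  haveI := R.iIns_full; haveI := R.iIns_faithful
  haveI : IsIso (R.iIns.map (R.adj₁.counit.app a)) :=
    isIso_of_hom_comp_eq_id _ (R.adj₁.right_triangle_components a)
  exact isIso_of_reflects_iso _ R.iIns

lemma unit₂_app_isIso (a : A) : IsIso (R.adj₂.unit.app a) := by
  haveI := R.iIns_full; haveI := R.iIns_faithful
  haveI : IsIso (R.iIns.map (R.adj₂.unit.app a)) :=
    isIso_of_comp_hom_eq_id _ (R.adj₂.left_triangle_components a)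
  exact isIso_of_reflects_iso _ R.iIns

lemma counit₄_app_isIso (X : C) : IsIso (R.adj₄.counit.app X) := by
  haveI := R.jPush_full; haveI := R.jPush_faithful
  haveI : IsIso (R.jPush.map (R.adj₄.counit.app X)) :=
    isIso_of_hom_comp_eq_id _ (R.adj₄.right_triangle_components X)
  exact isIso_of_reflects_iso _ R.jPush

lemma map_unit₁_isIso (M : B) : IsIso (R.iStar.map (R.adj₁.unit.app M)) := by
  haveI : IsIso (R.adj₁.counit.app (R.iStar.obj M)) := counit₁_app_isIso R _
  exact isIso_of_comp_hom_eq_id _ (R.adj₁.left_triangle_components M)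

lemma map_unit₄_isIso (M : B) : IsIso (R.jStar.map (R.adj₄.unit.app M)) := by
  haveI : IsIso (R.adj₄.counit.app (R.jStar.obj M)) := counit₄_app_isIso R _
  exact isIso_of_comp_hom_eq_id _ (R.adj₄.left_triangle_components M)

lemma unit₁_epi (M : B) : Epi (R.adj₁.unit.app M) := by
  haveI := R.iIns_full; haveI := R.iIns_faithful
  haveI : R.jStar.IsLeftAdjoint := R.adj₄.isLeftAdjoint
  haveI : R.iIns.IsLeftAdjoint := R.adj₂.isLeftAdjoint
  haveI : PreservesColimitsOfSize.{0,0} R.iStar := R.adj₁.leftAdjoint_preservesColimits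
  haveI : R.jStar.PreservesEpimorphisms :=
    Functor.preservesEpimorphisms_of_adjunction R.adj₄
  set u := R.adj₁.unit.app M with hu
  -- the cokernel of `u` is killed by `j^*`
  haveI : Epi (R.jStar.map (cokernel.π u)) := R.jStar.map_epi _
  have h1 : IsZero (R.jStar.obj (cokernel u)) :=
    isZero_of_epi (R.jStar.map (cokernel.π u)) (jStar_iIns_isZero R _)
  obtain ⟨Q₀, ⟨e⟩⟩ := (R.ker_jStar _).mp h1
  -- `i^*` kills the cokernel as well
  haveI : IsIso (R.iStar.map u) := map_unit₁_isIso R M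
  haveI : PreservesColimit (parallelPair u 0) R.iStar := inferInstance
  have h2 : IsZero (R.iStar.obj (cokernel u)) := by
    refine IsZero.of_iso ?_ ((PreservesCokernel.iso R.iStar u) ≪≫ cokernel.ofEpi _)
    exact isZero_zero A
  have h3 : IsZero Q₀ := by
    haveI : IsIso (R.adj₁.counit.app Q₀) := counit₁_app_isIso R Q₀
    exact h2.of_iso ((R.iStar.mapIso e) ≪≫ asIso (R.adj₁.counit.app Q₀)).symm
  have h4 : IsZero (cokernel u) := by
    haveI : R.iIns.PreservesZeroMorphisms := inferInstance
    exact (R.iIns.map_isZero h3).of_iso e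
  exact Abelian.epi_of_cokernel_π_eq_zero _ (h4.eq_of_tgt _ _)

lemma counit_unit_zero (M : B) :
    R.adj₃.counit.app M ≫ R.adj₁.unit.app M = 0 :=
  (R.adj₃.homEquiv _ _).injective ((jStar_iIns_isZero R _).eq_of_tgt _ _)

lemma counit_unit_exact (M : B) :
    (ShortComplex.mk (R.adj₃.counit.app M) (R.adj₁.unit.app M)
      (counit_unit_zero R M)).Exact := by
  haveI := R.jShriek_full; haveI := R.jShriek_faithful
  haveI : R.jStar.IsLeftAdjoint := R.adj₄.isLeftAdjoint
  haveI : R.jStar.PreservesEpimorphisms :=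
    Functor.preservesEpimorphisms_of_adjunction R.adj₄
  set ε := R.adj₃.counit.app M with hε
  set u := R.adj₁.unit.app M with hu
  -- `j^*` of `cokernel.π ε` is zero
  have hπ0 : R.jStar.map (cokernel.π ε) = 0 := by
    haveI : IsIso (R.jStar.map ε) := inferInstance
    apply zero_of_epi_comp (R.jStar.map ε)
    rw [← Functor.map_comp, cokernel.condition, Functor.map_zero]
  haveI : Epi (R.jStar.map (cokernel.π ε)) := R.jStar.map_epi _
  have h1 : IsZero (R.jStar.obj (cokernel ε)) := isZero_of_epi_zero _ hπ0
  obtain ⟨Q₀, ⟨e⟩⟩ := (R.ker_jStar _).mp h1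
  -- the canonical map `q : cokernel ε ⟶ i_* i^* M` is an isomorphism
  let q : cokernel ε ⟶ R.iIns.obj (R.iStar.obj M) := cokernel.desc ε u (counit_unit_zero R M)
  let r₀ : R.iStar.obj M ⟶ Q₀ := (R.adj₁.homEquiv M Q₀).symm (cokernel.π ε ≫ e.hom)
  have hr : u ≫ R.iIns.map r₀ = cokernel.π ε ≫ e.hom := by
    have h := (R.adj₁.homEquiv M Q₀).apply_symm_apply (cokernel.π ε ≫ e.hom)
    rw [Adjunction.homEquiv_unit] at h
    exact h
  let s : R.iIns.obj (R.iStar.obj M) ⟶ cokernel ε := R.iIns.map r₀ ≫ e.inv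
  haveI hue : Epi u := unit₁_epi R M
  have hπq : cokernel.π ε ≫ q = u := cokernel.π_desc _ _ _
  have h5 : u ≫ s = cokernel.π ε := by
    show u ≫ R.iIns.map r₀ ≫ e.inv = cokernel.π ε
    rw [← assoc, hr, assoc, e.hom_inv_id, comp_id]
  have hqs : q ≫ s = 𝟙 _ := by
    rw [← cancel_epi (cokernel.π ε), ← assoc, hπq, h5, comp_id]
  have hsq : s ≫ q = 𝟙 _ := by
    rw [← cancel_epi u, ← assoc, h5, hπq]
    exact (comp_id u).symm
  haveI : IsIso q := ⟨s, hqs, hsq⟩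
  -- hence `u` is a cokernel of `ε`
  refine ShortComplex.exact_of_g_is_cokernel _
    (CokernelCofork.IsColimit.ofπ' u (counit_unit_zero R M) ?_)
  intro W k hk
  refine ⟨inv q ≫ cokernel.desc ε k hk, ?_⟩
  have hπq : cokernel.π ε ≫ q = u := cokernel.π_desc _ _ _
  rw [← hπq, assoc, IsIso.hom_inv_id_assoc, cokernel.π_desc]

lemma isZero_iStar_kernel_unit (M : B) :
    IsZero (R.iStar.obj (kernel (R.adj₁.unit.app M))) := by
  haveI : R.iStar.IsLeftAdjoint := R.adj₁.isLeftAdjoint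
  haveI : R.iStar.PreservesEpimorphisms :=
    Functor.preservesEpimorphisms_of_adjunction R.adj₁
  set S := ShortComplex.mk (R.adj₃.counit.app M) (R.adj₁.unit.app M) (counit_unit_zero R M)
    with hS
  haveI : Epi S.toCycles := (ShortComplex.exact_iff_epi_toCycles S).mp (counit_unit_exact R M)
  let e : S.cycles ≅ kernel (R.adj₁.unit.app M) := S.cyclesIsoKernel
  haveI : Epi (S.toCycles ≫ e.hom) := epi_comp _ _
  haveI : Epi (R.iStar.map (S.toCycles ≫ e.hom)) := R.iStar.map_epi _
  exact isZero_of_epi (R.iStar.map (S.toCycles ≫ e.hom)) (iStar_jShriek_isZero R _)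

/-- If `i^!` is exact then `j_*` preserves short exact sequences. -/
lemma jPush_map_shortExact (hex : R.iShriek.IsExactFunctor)
    {X₁ X₂ X₃ : C} {f : X₁ ⟶ X₂} {g : X₂ ⟶ X₃} {w : f ≫ g = 0}
    (hS : (ShortComplex.mk f g w).ShortExact) :
    ∃ (w' : R.jPush.map f ≫ R.jPush.map g = 0),
      (ShortComplex.mk (R.jPush.map f) (R.jPush.map g) w').ShortExact := by
  haveI := R.iIns_full; haveI := R.iIns_faithful
  haveI : R.jPush.IsRightAdjoint := R.adj₄.isRightAdjoint
  haveI : R.jPush.PreservesMonomorphisms :=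
    Functor.preservesMonomorphisms_of_adjunction R.adj₄
  haveI : PreservesLimitsOfSize.{0,0} R.jPush := R.adj₄.rightAdjoint_preservesLimits
  have w' : R.jPush.map f ≫ R.jPush.map g = 0 := by
    rw [← Functor.map_comp, w, Functor.map_zero]
  refine ⟨w', ?_⟩
  haveI := hS.mono_f
  haveI := hS.epi_g
  -- `j_* g` is an epimorphism
  haveI hepi : Epi (R.jPush.map g) := by
    set G := R.jPush.map g with hG
    have hnat : R.jStar.map G ≫ R.adj₄.counit.app X₃ = R.adj₄.counit.app X₂ ≫ g :=
      R.adj₄.counit.naturality g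
    haveI : IsIso (R.adj₄.counit.app X₂) := counit₄_app_isIso R _
    haveI : IsIso (R.adj₄.counit.app X₃) := counit₄_app_isIso R _
    have hjg : R.jStar.map G = R.adj₄.counit.app X₂ ≫ g ≫ inv (R.adj₄.counit.app X₃) := by
      rw [← assoc, ← hnat, assoc, IsIso.hom_inv_id, comp_id]
    haveI : Epi (R.jStar.map G) := by rw [hjg]; infer_instance
    haveI : R.jStar.IsLeftAdjoint := R.adj₄.isLeftAdjoint
    haveI : R.jStar.PreservesEpimorphisms :=
      Functor.preservesEpimorphisms_of_adjunction R.adj₄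
    have hπ0 : R.jStar.map (cokernel.π G) = 0 := by
      apply zero_of_epi_comp (R.jStar.map G)
      rw [← Functor.map_comp, cokernel.condition, Functor.map_zero]
    haveI : Epi (R.jStar.map (cokernel.π G)) := R.jStar.map_epi _
    have h1 : IsZero (R.jStar.obj (cokernel G)) := isZero_of_epi_zero _ hπ0
    obtain ⟨Q₀, ⟨e⟩⟩ := (R.ker_jStar _).mp h1
    haveI : Epi (R.iShriek.map (cokernel.π G)) := hex.preserves_epi _
    have h2 : IsZero (R.iShriek.obj (cokernel G)) :=
      isZero_of_epi (R.iShriek.map (cokernel.π G)) (iShriek_jPush_isZero R X₃)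
    have h3 : IsZero Q₀ := by
      haveI : IsIso (R.adj₂.unit.app Q₀) := unit₂_app_isIso R Q₀
      exact h2.of_iso (asIso (R.adj₂.unit.app Q₀) ≪≫ R.iShriek.mapIso e.symm)
    have h4 : IsZero (cokernel G) := by
      haveI : R.iIns.IsLeftAdjoint := R.adj₂.isLeftAdjoint
      exact (R.iIns.map_isZero h3).of_iso e
    exact Abelian.epi_of_cokernel_π_eq_zero _ (h4.eq_of_tgt _ _)
  -- `j_* f` is a kernel of `j_* g`
  haveI : PreservesLimit (parallelPair g 0) R.jPush := inferInstance
  exact ShortComplex.ShortExact.mk'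
    (ShortComplex.exact_of_f_is_kernel _ (KernelFork.mapIsLimit _ hS.fIsKernel R.jPush))
    (R.jPush.map_mono f) hepi

end Recollement

end GluedAux

open GluedAux in
theorem recollement_glued_pair_exists_seq_left {A : Type u₁} {B : Type u₂} {C : Type u₃}
    [Category.{v₁} A] [Category.{v₂} B] [Category.{v₃} C]
    [Abelian A] [Abelian B] [Abelian C]
    [HasExt.{w₁} A] [HasExt.{w₃} C]
    (R : Recollement A B C) (T₁ F₁ : Set A) (T₂ F₂ : Set C)
    (h₁ : IsCotorsionPair A T₁ F₁) (h₂ : IsCotorsionPair C T₂ F₂)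
    (hex : R.iShriek.IsExactFunctor) (M : B) :
    ∃ (F T : B) (f : F ⟶ T) (g : T ⟶ M) (w : f ≫ g = 0),
      (R.iShriek.obj F ∈ F₁ ∧ R.jStar.obj F ∈ F₂) ∧
      (R.iStar.obj T ∈ T₁ ∧ R.jStar.obj T ∈ T₂) ∧
      (ShortComplex.mk f g w).ShortExact := by
  -- instances
  haveI := R.iIns_full; haveI := R.iIns_faithful
  haveI := R.jShriek_full; haveI := R.jShriek_faithful
  haveI := R.jPush_full; haveI := R.jPush_faithful
  haveI : R.iStar.IsLeftAdjoint := R.adj₁.isLeftAdjoint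
  haveI : R.iIns.IsLeftAdjoint := R.adj₂.isLeftAdjoint
  haveI : R.jStar.IsLeftAdjoint := R.adj₄.isLeftAdjoint
  haveI : R.iIns.IsRightAdjoint := R.adj₁.isRightAdjoint
  haveI : R.jStar.IsRightAdjoint := R.adj₃.isRightAdjoint
  haveI : PreservesColimitsOfSize.{0,0} R.iStar := R.adj₁.leftAdjoint_preservesColimits
  haveI : PreservesColimitsOfSize.{0,0} R.iIns := R.adj₂.leftAdjoint_preservesColimits
  haveI : PreservesLimitsOfSize.{0,0} R.iIns := R.adj₁.rightAdjoint_preservesLimits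
  haveI : PreservesColimitsOfSize.{0,0} R.jStar := R.adj₄.leftAdjoint_preservesColimits
  haveI : PreservesLimitsOfSize.{0,0} R.jStar := R.adj₃.rightAdjoint_preservesLimits
  -- Step 1 : a special sequence for `j^* M` in `C`
  obtain ⟨Y₂, X₂, c, d, w₂, hY₂F, hX₂T, hses₂⟩ := h₂.exists_seq_left (R.jStar.obj M)
  -- Step 2 : push it forward with `j_*`
  obtain ⟨wB₂, sesB₂⟩ := jPush_map_shortExact R hex hses₂
  -- Step 3 : pull back along the unit `M ⟶ j_* j^* M`
  let η : M ⟶ R.jPush.obj (R.jStar.obj M) := R.adj₄.unit.app M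
  let P := pullback (R.jPush.map d) η
  let sqP : IsPullback (pullback.fst (R.jPush.map d) η) (pullback.snd (R.jPush.map d) η)
      (R.jPush.map d) η := IsPullback.of_hasPullback _ _
  obtain ⟨ℓP, hℓP₁, hℓP₀, sesP⟩ := pullback_shortExact sesB₂ sqP
  -- Step 4 : a special sequence for `i^* P` in `A`
  obtain ⟨Y₁, X₁, a, b, w₁, hY₁F, hX₁T, hses₁⟩ := h₁.exists_seq_left (R.iStar.obj P)
  have sesB₁ : (ShortComplex.mk (R.iIns.map a) (R.iIns.map b)
      (by rw [← Functor.map_comp, w₁, Functor.map_zero])).ShortExact := by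
    have := hses₁.map_of_exact R.iIns
    exact this
  -- Step 5 : pull back along the unit `u : P ⟶ i_* i^* P`
  let u : P ⟶ R.iIns.obj (R.iStar.obj P) := R.adj₁.unit.app P
  let T := pullback (R.iIns.map b) u
  let sqT : IsPullback (pullback.fst (R.iIns.map b) u) (pullback.snd (R.iIns.map b) u)
      (R.iIns.map b) u := IsPullback.of_hasPullback _ _
  obtain ⟨ℓT, hℓT₁, hℓT₀, sesT⟩ := pullback_shortExact sesB₁ sqT
  haveI : Epi u := unit₁_epi R P
  obtain ⟨ℓK, hℓK₁, hℓK₀, sesK⟩ := pullback_shortExact (shortExact_kernel u) sqT.flip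
  -- `i^* T ∈ T₁`
  have hmemT₁ : R.iStar.obj T ∈ T₁ := by
    have hcoker := sesK.gIsCokernel
    haveI : PreservesColimit (parallelPair ℓK 0) R.iStar := inferInstance
    have hcoker' := CokernelCofork.mapIsColimit _ hcoker R.iStar
    have hz : R.iStar.map ℓK = 0 := (isZero_iStar_kernel_unit R P).eq_of_src _ _
    haveI : IsIso (R.iStar.map (pullback.fst (R.iIns.map b) u)) :=
      isIso_cofork_π_of_zero hz _ hcoker'
    haveI : IsIso (R.adj₁.counit.app X₁) := counit₁_app_isIso R X₁
    exact h₁.isoClosed_T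
      ((asIso (R.iStar.map (pullback.fst (R.iIns.map b) u)) ≪≫
        asIso (R.adj₁.counit.app X₁)).symm) hX₁T
  -- `j^* T ∈ T₂`
  have hmemT₂ : R.jStar.obj T ∈ T₂ := by
    -- `j^* T ≅ j^* P`
    have hjT := sesT.map_of_exact R.jStar
    haveI : IsIso (R.jStar.map (pullback.snd (R.iIns.map b) u)) :=
      hjT.isIso_g_iff.mpr (jStar_iIns_isZero R Y₁)
    -- `j^* P ≅ j^* j_* X₂`
    haveI : PreservesLimit (cospan (R.jPush.map d) η) R.jStar := inferInstance
    have sqC := sqP.map R.jStar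
    haveI : IsIso (R.jStar.map η) := map_unit₄_isIso R M
    haveI : IsIso (R.jStar.map (pullback.fst (R.jPush.map d) η)) := isIso_fst_of_isIso sqC
    haveI : IsIso (R.adj₄.counit.app X₂) := counit₄_app_isIso R X₂
    exact h₂.isoClosed_T
      ((asIso (R.jStar.map (pullback.snd (R.iIns.map b) u)) ≪≫
        asIso (R.jStar.map (pullback.fst (R.jPush.map d) η)) ≪≫
        asIso (R.adj₄.counit.app X₂)).symm) hX₂T
  -- Step 6 : the composite epimorphism and its kernel
  let g : T ⟶ M := pullback.snd (R.iIns.map b) u ≫ pullback.snd (R.jPush.map d) η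
  haveI : Epi (pullback.snd (R.iIns.map b) u) := sesT.epi_g
  haveI : Epi (pullback.snd (R.jPush.map d) η) := sesP.epi_g
  haveI : Epi g := epi_comp _ _
  let F := kernel g
  -- the square expressing `F` as a pullback of `j_* Y₂ ⟶ P` along `T ⟶ P`
  haveI : Mono ℓP := sesP.mono_f
  let bF : F ⟶ R.jPush.obj Y₂ := sesP.exact.lift (kernel.ι g ≫ pullback.snd (R.iIns.map b) u)
    (by rw [assoc]; exact kernel.condition g)
  have hbF : bF ≫ ℓP = kernel.ι g ≫ pullback.snd (R.iIns.map b) u := sesP.exact.lift_f _ _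
  have sqF : IsPullback (kernel.ι g) bF (pullback.snd (R.iIns.map b) u) ℓP := by
    apply IsPullback.of_isLimit' ⟨hbF.symm⟩
    apply PullbackCone.IsLimit.mk _
      (fun s => kernel.lift g s.fst
        (by rw [show g = pullback.snd (R.iIns.map b) u ≫ pullback.snd (R.jPush.map d) η from rfl,
              ← assoc, s.condition, assoc, hℓP₀, comp_zero]))
      (fun s => kernel.lift_ι _ _ _)
      (fun s => by
        rw [← cancel_mono ℓP, assoc, hbF, ← assoc, kernel.lift_ι, s.condition])
      (fun s m hm₁ hm₂ => by
        rw [← cancel_mono (kernel.ι g), kernel.lift_ι]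
        exact hm₁)
  obtain ⟨aF, haF₁, haF₀, sesF⟩ := pullback_shortExact sesT sqF
  -- memberships for `F`
  have hmemF₁ : R.iShriek.obj F ∈ F₁ := by
    obtain ⟨wk, hk⟩ := hex aF bF haF₀ sesF
    haveI : IsIso (R.iShriek.map aF) := hk.isIso_f_iff.mpr (iShriek_jPush_isZero R Y₂)
    haveI : IsIso (R.adj₂.unit.app Y₁) := unit₂_app_isIso R Y₁
    exact h₁.isoClosed_F (asIso (R.adj₂.unit.app Y₁) ≪≫ asIso (R.iShriek.map aF)) hY₁F
  have hmemF₂ : R.jStar.obj F ∈ F₂ := by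
    have hjF := sesF.map_of_exact R.jStar
    haveI : IsIso (R.jStar.map bF) := hjF.isIso_g_iff.mpr (jStar_iIns_isZero R Y₁)
    haveI : IsIso (R.adj₄.counit.app Y₂) := counit₄_app_isIso R Y₂
    exact h₂.isoClosed_F
      ((asIso (R.jStar.map bF) ≪≫ asIso (R.adj₄.counit.app Y₂)).symm) hY₂F
  exact ⟨F, T, kernel.ι g, g, kernel.condition g, ⟨hmemF₁, hmemF₂⟩, ⟨hmemT₁, hmemT₂⟩,
    shortExact_kernel g⟩
end

section
/- Let (A, B, C) be a recollement of abelian categories, let (T1, F1) and (T2, F2) be cotorsion pairs in A and C respectively, and let (T, F) be the glued pair. If i^! and j_! are exact, then every object M of B admits a short exact sequence 0 → M → F → T → 0 in B with F ∈ F and T ∈ T. -/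
open CategoryTheory Category Limits Abelian

universe w₁ w₂ w₃ v₁ v₂ v₃ u₁ u₂ u₃

section AuxLemmas

variable {B : Type u₂} [Category.{v₂} B] [Abelian B]

/-- In an abelian category, pushing out a short exact sequence
`0 → X → Y → Z → 0` along a morphism `e : X ⟶ M` yields a short exact sequence
`0 → M → P → Z → 0` where `P` is the pushout. -/
lemma aux_pushout_step {X Y Z M : B} (f : X ⟶ Y) (g : Y ⟶ Z) (w : f ≫ g = 0)
    (hS : (ShortComplex.mk f g w).ShortExact) (e : X ⟶ M) :
    ∃ (P : B) (t : Y ⟶ P) (r : M ⟶ P) (s : P ⟶ Z) (w' : r ≫ s = 0),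
      IsPushout f e t r ∧ t ≫ s = g ∧ (ShortComplex.mk r s w').ShortExact := by
  have hf : Mono f := hS.mono_f
  have hg : Epi g := hS.epi_g
  have hd : f ≫ g = e ≫ (0 : M ⟶ Z) := by rw [w, comp_zero]
  refine ⟨pushout f e, pushout.inl f e, pushout.inr f e, pushout.desc g 0 hd,
    pushout.inr_desc _ _ _, IsPushout.of_hasPushout f e, pushout.inl_desc _ _ _, ?_⟩
  have hts : pushout.inl f e ≫ pushout.desc g 0 hd = g := pushout.inl_desc _ _ _
  have hmono : Mono (pushout.inr f e) := inferInstance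
  have hepi : Epi (pushout.desc g 0 hd) := epi_of_epi_fac hts
  have hcoker : IsColimit (CokernelCofork.ofπ (pushout.desc g 0 hd)
      (pushout.inr_desc _ _ _)) := by
    refine CokernelCofork.IsColimit.ofπ' _ _ (fun {W} k hk => ?_)
    have hfk : f ≫ (pushout.inl f e ≫ k) = 0 := by
      rw [← assoc, pushout.condition, assoc, hk, comp_zero]
    obtain ⟨l, hl⟩ := CokernelCofork.IsColimit.desc' hS.gIsCokernel
      (pushout.inl f e ≫ k) hfk
    refine ⟨l, ?_⟩
    apply pushout.hom_ext
    · rw [← assoc, hts]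
      simpa using hl
    · rw [← assoc, pushout.inr_desc, zero_comp, hk]
  have hex : (ShortComplex.mk (pushout.inr f e) (pushout.desc g 0 hd)
      (pushout.inr_desc _ _ _)).Exact :=
    ShortComplex.exact_of_g_is_cokernel _ hcoker
  exact ShortComplex.ShortExact.mk' hex hmono hepi

/-- The map parallel to an epimorphism in a pushout square is an epimorphism. -/
lemma aux_epi_of_isPushout {P F Z T : B} {n : P ⟶ F} {s : P ⟶ Z} {t : F ⟶ T} {u : Z ⟶ T}
    (hpo : IsPushout n s t u) (hs : Epi s) : Epi t := by
  constructor
  intro W α β h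
  refine hpo.hom_ext h ?_
  rw [← cancel_epi s, ← assoc, ← hpo.w, assoc, h, ← assoc, hpo.w, assoc]

/-- If `s₁ : P ⟶ Z₁` is a cokernel of `m : M ⟶ P` and we push out along `n : P ⟶ F`,
then the pushout leg `t : F ⟶ T` is a cokernel of `m ≫ n`. -/
noncomputable def aux_isColimit_comp {M P F Z₁ T : B} (m : M ⟶ P) (s₁ : P ⟶ Z₁) (w₁ : m ≫ s₁ = 0)
    (hs₁ : IsColimit (CokernelCofork.ofπ s₁ w₁)) (hepi₁ : Epi s₁)
    (n : P ⟶ F) {t : F ⟶ T} {u : Z₁ ⟶ T} (hpo : IsPushout n s₁ t u)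
    (w : (m ≫ n) ≫ t = 0) :
    IsColimit (CokernelCofork.ofπ t w) := by
  have ht : Epi t := aux_epi_of_isPushout hpo hepi₁
  refine CokernelCofork.IsColimit.ofπ' _ _ (fun {W} k hk => ?_)
  have h1 : m ≫ (n ≫ k) = 0 := by rw [← assoc, hk]
  obtain ⟨α, hα⟩ := CokernelCofork.IsColimit.desc' hs₁ (n ≫ k) h1
  have hα' : s₁ ≫ α = n ≫ k := by simpa using hα
  exact ⟨hpo.desc k α hα'.symm, hpo.inl_desc _ _ _⟩

/-- In a short exact sequence whose third term is zero, the first map is an isomorphism. -/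
lemma aux_isIso_f_of_isZero {D : Type u₁} [Category.{v₁} D] [Abelian D]
    {X Y Z : D} {f : X ⟶ Y} {g : Y ⟶ Z} {w : f ≫ g = 0}
    (hS : (ShortComplex.mk f g w).ShortExact) (hZ : IsZero Z) : IsIso f := by
  have := hS.mono_f
  have hg : g = 0 := hZ.eq_of_tgt g 0
  have : Epi f := hS.exact.epi_f hg
  exact isIso_of_mono_of_epi f

end AuxLemmas

theorem recollement_glued_pair_exists_seq_right {A : Type u₁} {B : Type u₂} {C : Type u₃}
    [Category.{v₁} A] [Category.{v₂} B] [Category.{v₃} C]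
    [Abelian A] [Abelian B] [Abelian C]
    [HasExt.{w₁} A] [HasExt.{w₃} C]
    (R : Recollement A B C) (T₁ F₁ : Set A) (T₂ F₂ : Set C)
    (h₁ : IsCotorsionPair A T₁ F₁) (h₂ : IsCotorsionPair C T₂ F₂)
    (hex₁ : R.iShriek.IsExactFunctor) (hex₂ : R.jShriek.IsExactFunctor) (M : B) :
    ∃ (F T : B) (f : M ⟶ F) (g : F ⟶ T) (w : f ≫ g = 0),
      (R.iShriek.obj F ∈ F₁ ∧ R.jStar.obj F ∈ F₂) ∧
      (R.iStar.obj T ∈ T₁ ∧ R.jStar.obj T ∈ T₂) ∧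
      (ShortComplex.mk f g w).ShortExact := by
  -- basic instances
  have : R.iIns.Full := R.iIns_full
  have : R.iIns.Faithful := R.iIns_faithful
  have : R.jShriek.Full := R.jShriek_full
  have : R.jShriek.Faithful := R.jShriek_faithful
  have : R.iStar.IsLeftAdjoint := R.adj₁.isLeftAdjoint
  have : R.iIns.IsLeftAdjoint := R.adj₂.isLeftAdjoint
  have : R.iShriek.IsRightAdjoint := R.adj₂.isRightAdjoint
  have : R.jStar.IsLeftAdjoint := R.adj₄.isLeftAdjoint
  -- preservation instances
  have : PreservesColimitsOfSize.{0, 0} R.iStar := R.adj₁.leftAdjoint_preservesColimits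
  have : PreservesColimitsOfSize.{0, 0} R.iIns := R.adj₂.leftAdjoint_preservesColimits
  have : PreservesLimitsOfSize.{0, 0} R.iIns := R.adj₁.rightAdjoint_preservesLimits
  have : PreservesLimitsOfSize.{0, 0} R.iShriek := R.adj₂.rightAdjoint_preservesLimits
  have : PreservesColimitsOfSize.{0, 0} R.jStar := R.adj₄.leftAdjoint_preservesColimits
  have : PreservesLimitsOfSize.{0, 0} R.jStar := R.adj₃.rightAdjoint_preservesLimits
  have hiInsFL : PreservesFiniteLimits R.iIns :=
    PreservesLimitsOfSize.preservesFiniteLimits _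
  have hiInsFC : PreservesFiniteColimits R.iIns :=
    PreservesColimitsOfSize.preservesFiniteColimits _
  have hjStarFL : PreservesFiniteLimits R.jStar :=
    PreservesLimitsOfSize.preservesFiniteLimits _
  have hjStarFC : PreservesFiniteColimits R.jStar :=
    PreservesColimitsOfSize.preservesFiniteColimits _
  have hiStarFC : PreservesFiniteColimits R.iStar :=
    PreservesColimitsOfSize.preservesFiniteColimits _
  -- additivity
  have : PreservesBinaryBiproducts R.iStar :=
    preservesBinaryBiproducts_of_preservesBinaryCoproducts _
  have : R.iStar.Additive := Functor.additive_of_preservesBinaryBiproducts _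
  have : PreservesBinaryBiproducts R.iShriek :=
    preservesBinaryBiproducts_of_preservesBinaryProducts _
  have : R.iShriek.Additive := Functor.additive_of_preservesBinaryBiproducts _
  -- `i^!` preserves finite colimits since it is exact
  have hiShriekFC : PreservesFiniteColimits R.iShriek := by
    have hmap : ∀ S : ShortComplex B, S.ShortExact → (S.map R.iShriek).ShortExact := by
      intro S hS
      obtain ⟨w', hw⟩ := hex₁ S.f S.g S.zero hS
      exact hw
    exact (((Functor.exact_tfae R.iShriek).out 0 3 rfl rfl).mp hmap).2
  ----------------------------------------------------------------
  -- Step 1 : approximation of j^* M in C, pushed forward by j_!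
  ----------------------------------------------------------------
  obtain ⟨F_C, T_C, a, b, wab, hFC, hTC, hab⟩ := h₂.exists_seq_right (R.jStar.obj M)
  obtain ⟨wb, hSB⟩ := hex₂ a b wab hab
  obtain ⟨P, t₁, r₁, s₁, w₁, hPO₁, ht₁, hSES₁⟩ :=
    aux_pushout_step (R.jShriek.map a) (R.jShriek.map b) wb hSB (R.adj₃.counit.app M)
  -- `j^* P ≅ F_C`
  have hPF₂ : R.jStar.obj P ∈ F₂ := by
    have hPO₁' := hPO₁.map R.jStar
    have hiso : IsIso (R.jStar.map (R.adj₃.counit.app M)) := inferInstance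
    have sq : CommSq (R.jStar.map (R.jShriek.map a)) (R.jStar.map (R.adj₃.counit.app M))
        (𝟙 (R.jStar.obj (R.jShriek.obj F_C)))
        (inv (R.jStar.map (R.adj₃.counit.app M)) ≫ R.jStar.map (R.jShriek.map a)) :=
      ⟨by simp⟩
    have hPO₁'' := IsPushout.of_vert_isIso sq
    have e₁ : R.jStar.obj P ≅ R.jStar.obj (R.jShriek.obj F_C) :=
      hPO₁'.isoIsPushout _ _ hPO₁''
    exact h₂.isoClosed_F ((asIso (R.adj₃.unit.app F_C)).trans e₁.symm) hFC
  ----------------------------------------------------------------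
  -- Step 2 : approximation of i^! P in A, pushed forward by i_*
  ----------------------------------------------------------------
  obtain ⟨F_A, T_A, c, d, wcd, hFA, hTA, hcd⟩ := h₁.exists_seq_right (R.iShriek.obj P)
  have hSB2 : ((ShortComplex.mk c d wcd).map R.iIns).ShortExact :=
    hcd.map_of_exact R.iIns
  obtain ⟨Fb, t₂, r₂, s₂, w₂, hPO₂, ht₂, hSES₂⟩ :=
    aux_pushout_step (R.iIns.map c) (R.iIns.map d)
      (((ShortComplex.mk c d wcd).map R.iIns).zero) hSB2 (R.adj₂.counit.app P)
  -- `i^! Fb ≅ F_A`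
  have hFbF₁ : R.iShriek.obj Fb ∈ F₁ := by
    have hPO₂' := hPO₂.map R.iShriek
    have hiso : IsIso (R.iShriek.map (R.adj₂.counit.app P)) := inferInstance
    have sq : CommSq (R.iShriek.map (R.iIns.map c)) (R.iShriek.map (R.adj₂.counit.app P))
        (𝟙 (R.iShriek.obj (R.iIns.obj F_A)))
        (inv (R.iShriek.map (R.adj₂.counit.app P)) ≫ R.iShriek.map (R.iIns.map c)) :=
      ⟨by simp⟩
    have hPO₂'' := IsPushout.of_vert_isIso sq
    have e₂ : R.iShriek.obj Fb ≅ R.iShriek.obj (R.iIns.obj F_A) :=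
      hPO₂'.isoIsPushout _ _ hPO₂''
    exact h₁.isoClosed_F ((asIso (R.adj₂.unit.app F_A)).trans e₂.symm) hFA
  -- `j^* Fb ≅ j^* P`
  have hZTA : IsZero (R.jStar.obj (R.iIns.obj T_A)) :=
    (R.ker_jStar _).mpr ⟨T_A, ⟨Iso.refl _⟩⟩
  have hFbF₂ : R.jStar.obj Fb ∈ F₂ := by
    have hS2' : ((ShortComplex.mk r₂ s₂ w₂).map R.jStar).ShortExact :=
      hSES₂.map_of_exact R.jStar
    have : IsIso (R.jStar.map r₂) := aux_isIso_f_of_isZero hS2' hZTA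
    exact h₂.isoClosed_F (asIso (R.jStar.map r₂)) hPF₂
  ----------------------------------------------------------------
  -- Step 3 : the quotient T
  ----------------------------------------------------------------
  obtain ⟨T, t₃, r₃, s₃, w₃, hPO₃, ht₃, hSES₃⟩ :=
    aux_pushout_step r₂ s₂ w₂ hSES₂ s₁
  -- the final short exact sequence
  have hw : (r₁ ≫ r₂) ≫ t₃ = 0 := by
    rw [assoc, hPO₃.w, ← assoc, w₁, zero_comp]
  have hmono : Mono (r₁ ≫ r₂) := by
    have := hSES₁.mono_f
    have := hSES₂.mono_f
    exact mono_comp _ _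
  have hepi : Epi t₃ := aux_epi_of_isPushout hPO₃ hSES₁.epi_g
  have hcoker : IsColimit (CokernelCofork.ofπ t₃ hw) :=
    aux_isColimit_comp r₁ s₁ w₁ hSES₁.gIsCokernel hSES₁.epi_g r₂ hPO₃ hw
  have hfinal : (ShortComplex.mk (r₁ ≫ r₂) t₃ hw).ShortExact :=
    ShortComplex.ShortExact.mk' (ShortComplex.exact_of_g_is_cokernel _ hcoker) hmono hepi
  ----------------------------------------------------------------
  -- memberships for T
  ----------------------------------------------------------------
  -- `j^* T ≅ T_C`
  have hTT₂ : R.jStar.obj T ∈ T₂ := by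
    have hS3' : ((ShortComplex.mk r₃ s₃ w₃).map R.jStar).ShortExact :=
      hSES₃.map_of_exact R.jStar
    have : IsIso (R.jStar.map r₃) := aux_isIso_f_of_isZero hS3' hZTA
    exact h₂.isoClosed_T ((asIso (R.adj₃.unit.app T_C)).trans (asIso (R.jStar.map r₃))) hTC
  -- `i^* T ≅ T_A`
  have hTT₁ : R.iStar.obj T ∈ T₁ := by
    -- `i^* (j_! T_C)` is zero
    have hz2 : IsZero (R.jStar.obj (R.iIns.obj (R.iStar.obj (R.jShriek.obj T_C)))) :=
      (R.ker_jStar _).mpr ⟨_, ⟨Iso.refl _⟩⟩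
    have hzero : IsZero (R.iStar.obj (R.jShriek.obj T_C)) := by
      rw [IsZero.iff_id_eq_zero]
      apply (R.adj₁.homEquiv _ _).injective
      apply (R.adj₃.homEquiv _ _).injective
      exact hz2.eq_of_tgt _ _
    have hmapr := ((Functor.preservesFiniteColimits_tfae R.iStar).out 3 0 rfl rfl).mp
      hiStarFC (ShortComplex.mk r₃ s₃ w₃) hSES₃
    have hf0 : ((ShortComplex.mk r₃ s₃ w₃).map R.iStar).f = 0 := hzero.eq_of_src _ _
    have hmonog : Mono ((ShortComplex.mk r₃ s₃ w₃).map R.iStar).g := hmapr.1.mono_g hf0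
    have hepig : Epi (R.iStar.map s₃) := hmapr.2
    have hm : Mono (R.iStar.map s₃) := hmonog
    have : IsIso (R.iStar.map s₃) := isIso_of_mono_of_epi _
    exact h₁.isoClosed_T
      ((asIso (R.adj₁.counit.app T_A)).symm.trans (asIso (R.iStar.map s₃)).symm) hTA
  exact ⟨Fb, T, r₁ ≫ r₂, t₃, hw, ⟨hFbF₁, hFbF₂⟩, ⟨hTT₁, hTT₂⟩, hfinal⟩
end

section
/- Let (A, B, C) be a recollement of abelian categories such that B has enough projectives and i^! and j_! are exact. Let (T1, F1) and (T2, F2) be cotorsion pairs in A and C respectively, and let (T, F) be the glued pair. If Ext^1_B(T, F) = 0 for all T ∈ T and F ∈ F, then (T, F) is a cotorsion pair in B. -/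
open CategoryTheory Category Limits Abelian

universe w₁ w₂ w₃ v₁ v₂ v₃ u₁ u₂ u₃

namespace RecollementGluingAux

section MiniLemmas

variable {D : Type u₁} [Category.{v₁} D] [Abelian D]

lemma isZero_of_epi_zero {X Y : D} (f : X ⟶ Y) [Epi f] (hX : IsZero X) : IsZero Y :=
  IsZero.of_epi_eq_zero f (hX.eq_of_src f 0)

lemma isZero_of_mono_zero {X Y : D} (f : X ⟶ Y) [Mono f] (hY : IsZero Y) : IsZero X :=
  IsZero.of_mono_eq_zero f (hY.eq_of_tgt f 0)

lemma epi_of_isZero_cokernel {X Y : D} (f : X ⟶ Y) (h : IsZero (cokernel f)) : Epi f :=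
  Abelian.epi_of_cokernel_π_eq_zero f (h.eq_of_tgt (cokernel.π f) 0)

lemma mono_of_isZero_kernel {X Y : D} (f : X ⟶ Y) (h : IsZero (kernel f)) : Mono f :=
  Abelian.mono_of_kernel_ι_eq_zero f (h.eq_of_src (kernel.ι f) 0)

lemma isZero_cokernel_of_epi {X Y : D} (f : X ⟶ Y) [Epi f] : IsZero (cokernel f) :=
  IsZero.of_epi_eq_zero (cokernel.π f) (cokernel.π_of_epi f)

lemma isZero_kernel_of_mono {X Y : D} (f : X ⟶ Y) [Mono f] : IsZero (kernel f) :=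
  IsZero.of_mono_eq_zero (kernel.ι f) (kernel.ι_of_mono f)

lemma isZero_cokernel_of_isZero_tgt {X Y : D} (f : X ⟶ Y) (h : IsZero Y) :
    IsZero (cokernel f) :=
  isZero_of_epi_zero (cokernel.π f) h

lemma isZero_kernel_of_isZero_src {X Y : D} (f : X ⟶ Y) (h : IsZero X) :
    IsZero (kernel f) :=
  isZero_of_mono_zero (kernel.ι f) h

lemma shortExact_of_mono {X Y : D} (f : X ⟶ Y) [Mono f] :
    (ShortComplex.mk f (cokernel.π f) (cokernel.condition f)).ShortExact where
  exact := ShortComplex.exact_of_g_is_cokernel _ (cokernelIsCokernel f)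

lemma shortExact_of_epi {X Y : D} (g : X ⟶ Y) [Epi g] :
    (ShortComplex.mk (kernel.ι g) g (kernel.condition g)).ShortExact where
  exact := ShortComplex.exact_of_f_is_kernel _ (kernelIsKernel g)

/-- From a short exact sequence, the canonical identification of the cokernel of `f`. -/
noncomputable def cokernelIsoOfShortExact {S : ShortComplex D} (hS : S.ShortExact) :
    cokernel S.f ≅ S.X₃ :=
  haveI := hS.epi_g
  IsColimit.coconePointUniqueUpToIso (cokernelIsCokernel S.f) hS.exact.gIsCokernel

/-- From a short exact sequence, the canonical identification of the kernel of `g`. -/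
noncomputable def kernelIsoOfShortExact {S : ShortComplex D} (hS : S.ShortExact) :
    kernel S.g ≅ S.X₁ :=
  haveI := hS.mono_f
  IsLimit.conePointUniqueUpToIso (kernelIsKernel S.g) hS.exact.fIsKernel

noncomputable def cokernelCoforkOfEpi {X Y : D} (g : X ⟶ Y) [Epi g] :
    IsColimit (CokernelCofork.ofπ g (kernel.condition g)) :=
  haveI : Epi (ShortComplex.mk (kernel.ι g) g (kernel.condition g)).g := ‹Epi g›
  (shortExact_of_epi g).exact.gIsCokernel

lemma isZero_X₃_of_shortExact_of_epi_f {S : ShortComplex D} (hS : S.ShortExact) (h : Epi S.f) :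
    IsZero S.X₃ := by
  haveI := hS.epi_g
  haveI := h
  have hg : S.g = 0 := by rw [← cancel_epi S.f, S.zero, comp_zero]
  exact IsZero.of_epi_eq_zero S.g hg

lemma isIso_of_isColimit_cofork {X Y Z : D} {f : X ⟶ Y} {g : Y ⟶ Z} {w : f ≫ g = 0}
    (h : IsColimit (CokernelCofork.ofπ g w)) (hf : f = 0) : IsIso g := by
  have h1 : g ≫ h.desc (CokernelCofork.ofπ (𝟙 Y) (by rw [hf, zero_comp])) = 𝟙 Y :=
    Cofork.IsColimit.π_desc h
  refine ⟨h.desc (CokernelCofork.ofπ (𝟙 Y) (by rw [hf, zero_comp])), h1, ?_⟩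
  apply Cofork.IsColimit.hom_ext h
  have hπ : Cofork.π (CokernelCofork.ofπ g w) = g := rfl
  rw [hπ, ← Category.assoc, h1]; simp

/-- The kernel of the second projection of a pullback agrees with the kernel of the
first morphism. -/
noncomputable def kernelPullbackSndIso {X Y Z : D} (p : X ⟶ Z) (g : Y ⟶ Z) :
    kernel (pullback.snd p g) ≅ kernel p := by
  refine IsLimit.conePointUniqueUpToIso (kernelIsKernel (pullback.snd p g))
    (KernelFork.IsLimit.ofι (pullback.lift (kernel.ι p) 0 (by simp)) (pullback.lift_snd _ _ _)
      (fun {W} a ha => kernel.lift p (a ≫ pullback.fst p g)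
        (by rw [Category.assoc, pullback.condition, ← Category.assoc, ha, zero_comp]))
      (fun {W} a ha => ?_) (fun {W} a ha m hm => ?_))
  · apply pullback.hom_ext
    · rw [Category.assoc, pullback.lift_fst, kernel.lift_ι]
    · rw [Category.assoc, pullback.lift_snd, comp_zero, ha]
  · have : m ≫ pullback.lift (kernel.ι p) 0 (by simp) ≫ pullback.fst p g
        = a ≫ pullback.fst p g := by rw [← Category.assoc, hm]
    rw [pullback.lift_fst] at this
    apply (cancel_mono (kernel.ι p)).mp
    rw [kernel.lift_ι]
    exact this

/-- The cokernel of `pushout.inl f g` agrees with the cokernel of `g`. -/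
noncomputable def cokernelPushoutInlIso {Z X Y : D} (f : Z ⟶ X) (g : Z ⟶ Y) :
    cokernel (pushout.inl f g) ≅ cokernel g := by
  refine IsColimit.coconePointUniqueUpToIso (cokernelIsCokernel (pushout.inl f g))
    (CokernelCofork.IsColimit.ofπ (f := pushout.inl f g) (pushout.desc (0 : X ⟶ cokernel g) (cokernel.π g) (by simp))
      (pushout.inl_desc _ _ _)
      (fun {W} a ha => cokernel.desc g (pushout.inr f g ≫ a)
        (by rw [← Category.assoc, ← pushout.condition, Category.assoc, ha, comp_zero]))
      (fun {W} a ha => ?_) (fun {W} a ha m hm => ?_))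
  · apply pushout.hom_ext
    · simp only [pushout.inl_desc_assoc, zero_comp, ha]
    · simp only [pushout.inr_desc_assoc, cokernel.π_desc]
  · have h2 : cokernel.π g ≫ m = pushout.inr f g ≫ a := by
      have h3 : pushout.inr f g ≫ pushout.desc (0 : X ⟶ cokernel g) (cokernel.π g)
          (by simp) = cokernel.π g := pushout.inr_desc _ _ _
      rw [← h3, Category.assoc, hm]
    apply coequalizer.hom_ext
    simp only [cokernel.π_desc]
    exact h2

/-- The cokernel of `pushout.inr f g` agrees with the cokernel of `f`. -/
noncomputable def cokernelPushoutInrIso {Z X Y : D} (f : Z ⟶ X) (g : Z ⟶ Y) :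
    cokernel (pushout.inr f g) ≅ cokernel f := by
  refine IsColimit.coconePointUniqueUpToIso (cokernelIsCokernel (pushout.inr f g))
    (CokernelCofork.IsColimit.ofπ (f := pushout.inr f g) (pushout.desc (cokernel.π f) (0 : Y ⟶ cokernel f) (by simp))
      (pushout.inr_desc _ _ _)
      (fun {W} a ha => cokernel.desc f (pushout.inl f g ≫ a)
        (by rw [← Category.assoc, pushout.condition, Category.assoc, ha, comp_zero]))
      (fun {W} a ha => ?_) (fun {W} a ha m hm => ?_))
  · apply pushout.hom_ext
    · simp only [pushout.inl_desc_assoc, cokernel.π_desc]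
    · simp only [pushout.inr_desc_assoc, zero_comp, ha]
  · have h2 : cokernel.π f ≫ m = pushout.inl f g ≫ a := by
      have h3 : pushout.inl f g ≫ pushout.desc (cokernel.π f) (0 : Y ⟶ cokernel f)
          (by simp) = cokernel.π f := pushout.inl_desc _ _ _
      rw [← h3, Category.assoc, hm]
    apply coequalizer.hom_ext
    simp only [cokernel.π_desc]
    exact h2

end MiniLemmas

section Adj

variable {C₁ : Type u₁} {C₂ : Type u₂} [Category.{v₁} C₁] [Category.{v₂} C₂]

lemma pfcOfAdj {F : C₁ ⥤ C₂} {G : C₂ ⥤ C₁} (adj : F ⊣ G) : PreservesFiniteColimits F := by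
  haveI : PreservesColimitsOfSize.{0, 0} F := adj.leftAdjoint_preservesColimits
  exact PreservesColimitsOfSize.preservesFiniteColimits F

lemma pflOfAdj {F : C₁ ⥤ C₂} {G : C₂ ⥤ C₁} (adj : F ⊣ G) : PreservesFiniteLimits G := by
  haveI : PreservesLimitsOfSize.{0, 0} G := adj.rightAdjoint_preservesLimits
  exact PreservesLimitsOfSize.preservesFiniteLimits G

end Adj


section ExactFunctor

variable {C₁ : Type u₁} {C₂ : Type u₂} [Category.{v₁} C₁] [Category.{v₂} C₂]
  [Abelian C₁] [Abelian C₂]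

lemma epi_map_of_isExactFunctor {F : C₁ ⥤ C₂} (hF : F.IsExactFunctor)
    {X Y : C₁} (g : X ⟶ Y) [Epi g] : Epi (F.map g) := by
  obtain ⟨w', h⟩ := hF (kernel.ι g) g (kernel.condition g) (shortExact_of_epi g)
  exact h.epi_g

end ExactFunctor

section RecLemmas

variable {A : Type u₁} {B : Type u₂} {C : Type u₃}
    [Category.{v₁} A] [Category.{v₂} B] [Category.{v₃} C]
    [Abelian A] [Abelian B] [Abelian C]
variable (R : Recollement A B C)

lemma isZero_jStar_iIns (X : A) : IsZero (R.jStar.obj (R.iIns.obj X)) :=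
  (R.ker_jStar _).mpr ⟨X, ⟨Iso.refl _⟩⟩

lemma hom_jShriek_iIns_eq_zero {c : C} {X : A} (φ : R.jShriek.obj c ⟶ R.iIns.obj X) : φ = 0 := by
  apply (R.adj₃.homEquiv c (R.iIns.obj X)).injective
  exact (isZero_jStar_iIns R X).eq_of_tgt _ _

lemma hom_iIns_jPush_eq_zero {X : A} {c : C} (φ : R.iIns.obj X ⟶ R.jPush.obj c) : φ = 0 := by
  apply (R.adj₄.homEquiv (R.iIns.obj X) c).symm.injective
  exact (isZero_jStar_iIns R X).eq_of_src _ _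

lemma isZero_iStar_jShriek (c : C) : IsZero (R.iStar.obj (R.jShriek.obj c)) := by
  rw [IsZero.iff_id_eq_zero]
  apply (R.adj₁.homEquiv (R.jShriek.obj c) (R.iStar.obj (R.jShriek.obj c))).injective
  rw [hom_jShriek_iIns_eq_zero R (R.adj₁.homEquiv _ _ (𝟙 _)),
      hom_jShriek_iIns_eq_zero R (R.adj₁.homEquiv _ _ 0)]

lemma isZero_iShriek_jPush (c : C) : IsZero (R.iShriek.obj (R.jPush.obj c)) := by
  rw [IsZero.iff_id_eq_zero]
  apply (R.adj₂.homEquiv (R.iShriek.obj (R.jPush.obj c)) (R.jPush.obj c)).symm.injective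
  rw [hom_iIns_jPush_eq_zero R ((R.adj₂.homEquiv _ _).symm (𝟙 _)),
      hom_iIns_jPush_eq_zero R ((R.adj₂.homEquiv _ _).symm 0)]

lemma epi_unit₁ (X : B) : Epi (R.adj₁.unit.app X) := by
  haveI := R.iIns_full; haveI := R.iIns_faithful
  haveI := R.adj₁.isLeftAdjoint; haveI := R.adj₁.isRightAdjoint
  haveI := R.adj₄.isLeftAdjoint
  haveI := pfcOfAdj R.adj₁; haveI := pfcOfAdj R.adj₄
  apply epi_of_isZero_cokernel
  have hzj : IsZero (R.jStar.obj (cokernel (R.adj₁.unit.app X))) := by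
    refine IsZero.of_iso ?_ (PreservesCokernel.iso R.jStar _)
    exact isZero_cokernel_of_isZero_tgt _ (isZero_jStar_iIns R _)
  obtain ⟨A₀, ⟨eQ⟩⟩ := (R.ker_jStar _).mp hzj
  have hzi : IsZero (R.iStar.obj (cokernel (R.adj₁.unit.app X))) := by
    refine IsZero.of_iso ?_ (PreservesCokernel.iso R.iStar _)
    haveI : IsIso (R.iStar.map (R.adj₁.unit.app X)) := inferInstance
    exact isZero_cokernel_of_epi _
  have hzA : IsZero A₀ :=
    IsZero.of_iso hzi ((asIso (R.adj₁.counit.app A₀)).symm ≪≫ R.iStar.mapIso eQ.symm)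
  exact IsZero.of_iso (R.iIns.map_isZero hzA) eQ

lemma mono_counit₂ (X : B) : Mono (R.adj₂.counit.app X) := by
  haveI := R.iIns_full; haveI := R.iIns_faithful
  haveI := R.adj₁.isRightAdjoint; haveI := R.adj₂.isRightAdjoint
  haveI := R.adj₃.isLeftAdjoint
  haveI := pflOfAdj R.adj₂; haveI := pflOfAdj R.adj₃
  apply mono_of_isZero_kernel
  have hzj : IsZero (R.jStar.obj (kernel (R.adj₂.counit.app X))) := by
    refine IsZero.of_iso ?_ (PreservesKernel.iso R.jStar _)
    exact isZero_kernel_of_isZero_src _ (isZero_jStar_iIns R _)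
  obtain ⟨A₀, ⟨eQ⟩⟩ := (R.ker_jStar _).mp hzj
  have hzi : IsZero (R.iShriek.obj (kernel (R.adj₂.counit.app X))) := by
    refine IsZero.of_iso ?_ (PreservesKernel.iso R.iShriek _)
    haveI : IsIso (R.iShriek.map (R.adj₂.counit.app X)) := inferInstance
    exact isZero_kernel_of_mono _
  have hzA : IsZero A₀ :=
    IsZero.of_iso hzi ((asIso (R.adj₂.unit.app A₀)) ≪≫ R.iShriek.mapIso eQ.symm)
  exact IsZero.of_iso (R.iIns.map_isZero hzA) eQ

lemma jPush_isExactFunctor (hex₁ : R.iShriek.IsExactFunctor) : R.jPush.IsExactFunctor := by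
  intro X Y Z f g w hS
  haveI := R.iIns_full; haveI := R.iIns_faithful
  haveI := R.jPush_full; haveI := R.jPush_faithful
  haveI := R.adj₁.isRightAdjoint; haveI := R.adj₄.isRightAdjoint
  haveI := R.adj₄.isLeftAdjoint
  haveI := pflOfAdj R.adj₄; haveI := pfcOfAdj R.adj₄
  haveI := hS.mono_f
  haveI := hS.epi_g
  haveI hm : Mono (R.jPush.map f) := preserves_mono_of_preservesLimit _ _
  haveI hepi : Epi (R.jPush.map g) := by
    apply epi_of_isZero_cokernel
    have hzj : IsZero (R.jStar.obj (cokernel (R.jPush.map g))) := by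
      refine IsZero.of_iso ?_ (PreservesCokernel.iso R.jStar _)
      have hconj : R.jStar.map (R.jPush.map g)
          = R.adj₄.counit.app Y ≫ g ≫ inv (R.adj₄.counit.app Z) := by
        have hnat := R.adj₄.counit.naturality g
        simp only [Functor.id_map, Functor.comp_map] at hnat
        rw [← cancel_mono (R.adj₄.counit.app Z)]
        simp [hnat]
      refine IsZero.of_iso ?_ (cokernelIsoOfEq hconj)
      haveI : Epi (R.adj₄.counit.app Y ≫ g ≫ inv (R.adj₄.counit.app Z)) := by
        infer_instance
      exact isZero_cokernel_of_epi _
    obtain ⟨A₀, ⟨eQ⟩⟩ := (R.ker_jStar _).mp hzj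
    have hzi : IsZero (R.iShriek.obj (cokernel (R.jPush.map g))) := by
      haveI : Epi (R.iShriek.map (cokernel.π (R.jPush.map g))) :=
        epi_map_of_isExactFunctor hex₁ _
      exact isZero_of_epi_zero (R.iShriek.map (cokernel.π (R.jPush.map g)))
        (isZero_iShriek_jPush R _)
    have hzA : IsZero A₀ :=
      IsZero.of_iso hzi ((asIso (R.adj₂.unit.app A₀)) ≪≫ R.iShriek.mapIso eQ.symm)
    exact IsZero.of_iso (R.iIns.map_isZero hzA) eQ
  have w' : R.jPush.map f ≫ R.jPush.map g = 0 := by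
    rw [← R.jPush.map_comp, w, Functor.map_zero]
  refine ⟨w', ?_⟩
  have hexact : ((ShortComplex.mk f g w).map R.jPush).Exact :=
    hS.exact.map_of_mono_of_preservesKernel R.jPush hS.mono_f inferInstance
  exact { exact := hexact, mono_f := hm, epi_g := hepi }

end RecLemmas

end RecollementGluingAux

open RecollementGluingAux

set_option maxHeartbeats 3200000

theorem recollement_glued_cotorsion_pair_of_ext_vanishing {A : Type u₁} {B : Type u₂} {C : Type u₃}
    [Category.{v₁} A] [Category.{v₂} B] [Category.{v₃} C]
    [Abelian A] [Abelian B] [Abelian C]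
    [HasExt.{w₁} A] [HasExt.{w₂} B] [HasExt.{w₃} C]
    (R : Recollement A B C) [EnoughProjectives B] (T₁ F₁ : Set A) (T₂ F₂ : Set C)
    (h₁ : IsCotorsionPair A T₁ F₁) (h₂ : IsCotorsionPair C T₂ F₂)
    (hex₁ : R.iShriek.IsExactFunctor) (hex₂ : R.jShriek.IsExactFunctor)
    (hvanish : ∀ X Y : B, (R.iStar.obj X ∈ T₁ ∧ R.jStar.obj X ∈ T₂) →
      (R.iShriek.obj Y ∈ F₁ ∧ R.jStar.obj Y ∈ F₂) → ∀ e : Abelian.Ext X Y 1, e = 0) :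
    IsCotorsionPair B {X | R.iStar.obj X ∈ T₁ ∧ R.jStar.obj X ∈ T₂}
      {Y | R.iShriek.obj Y ∈ F₁ ∧ R.jStar.obj Y ∈ F₂} := by
  haveI := R.iIns_full; haveI := R.iIns_faithful
  haveI := R.jShriek_full; haveI := R.jShriek_faithful
  haveI := R.jPush_full; haveI := R.jPush_faithful
  haveI := R.adj₁.isLeftAdjoint; haveI := R.adj₁.isRightAdjoint
  haveI := R.adj₂.isLeftAdjoint; haveI := R.adj₂.isRightAdjoint
  haveI := R.adj₃.isLeftAdjoint; haveI := R.adj₃.isRightAdjoint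
  haveI := R.adj₄.isLeftAdjoint; haveI := R.adj₄.isRightAdjoint
  haveI := pfcOfAdj R.adj₁; haveI := pflOfAdj R.adj₁
  haveI := pfcOfAdj R.adj₂; haveI := pflOfAdj R.adj₂
  haveI := pfcOfAdj R.adj₃; haveI := pflOfAdj R.adj₃
  haveI := pfcOfAdj R.adj₄; haveI := pflOfAdj R.adj₄
  refine ⟨?_, ?_, ?_, ?_, ?_⟩
  · rintro X Y e ⟨hT1, hT2⟩
    exact ⟨h₁.isoClosed_T (R.iStar.mapIso e) hT1, h₂.isoClosed_T (R.jStar.mapIso e) hT2⟩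
  · rintro X Y e ⟨hF1, hF2⟩
    exact ⟨h₁.isoClosed_F (R.iShriek.mapIso e) hF1, h₂.isoClosed_F (R.jStar.mapIso e) hF2⟩
  · intro X Y hX hY e
    exact hvanish X Y hX hY e
  · -- special precover: 0 ⟶ F' ⟶ T' ⟶ M ⟶ 0
    intro M
    obtain ⟨f₂, t₂, α, β, wC, hf₂, ht₂, hseC⟩ := h₂.exists_seq_left (R.jStar.obj M)
    obtain ⟨wC', hseC'⟩ := jPush_isExactFunctor R hex₁ α β wC hseC
    haveI : Mono (R.jPush.map α) := hseC'.mono_f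
    haveI : Epi (R.jPush.map β) := hseC'.epi_g
    have ekp : kernel (R.jPush.map β) ≅ R.jPush.obj f₂ := kernelIsoOfShortExact hseC'
    have ekG : kernel (pullback.snd (R.jPush.map β) (R.adj₄.unit.app M)) ≅ R.jPush.obj f₂ :=
      kernelPullbackSndIso _ _ ≪≫ ekp
    haveI : Epi (pullback.snd (R.jPush.map β) (R.adj₄.unit.app M)) := inferInstance
    haveI : IsIso (R.jStar.map (R.adj₄.unit.app M)) := inferInstance
    haveI : IsIso (pullback.fst (R.jStar.map (R.jPush.map β))
        (R.jStar.map (R.adj₄.unit.app M))) := inferInstance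
    have eGj : R.jStar.obj (pullback (R.jPush.map β) (R.adj₄.unit.app M)) ≅ t₂ :=
      PreservesPullback.iso R.jStar _ _ ≪≫
        asIso (pullback.fst (R.jStar.map (R.jPush.map β)) (R.jStar.map (R.adj₄.unit.app M))) ≪≫
        asIso (R.adj₄.counit.app t₂)
    obtain ⟨f₁, t₁, γ, δ, wA, hf₁, ht₁, hseA⟩ :=
      h₁.exists_seq_left (R.iStar.obj (pullback (R.jPush.map β) (R.adj₄.unit.app M)))
    have hseA' : ((ShortComplex.mk γ δ wA).map R.iIns).ShortExact := hseA.map_of_exact R.iIns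
    haveI : Mono (R.iIns.map γ) := hseA'.mono_f
    haveI : Epi (R.iIns.map δ) := hseA'.epi_g
    haveI : Epi (R.adj₁.unit.app (pullback (R.jPush.map β) (R.adj₄.unit.app M))) := epi_unit₁ R _
    haveI : Epi (pullback.snd (R.iIns.map δ)
        (R.adj₁.unit.app (pullback (R.jPush.map β) (R.adj₄.unit.app M)))) := inferInstance
    haveI : Epi (pullback.fst (R.iIns.map δ)
        (R.adj₁.unit.app (pullback (R.jPush.map β) (R.adj₄.unit.app M)))) := inferInstance
    have ekT : kernel (pullback.snd (R.iIns.map δ)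
        (R.adj₁.unit.app (pullback (R.jPush.map β) (R.adj₄.unit.app M)))) ≅ R.iIns.obj f₁ :=
      kernelPullbackSndIso _ _ ≪≫ kernelIsoOfShortExact hseA'
    have ekK : kernel (pullback.fst (R.iIns.map δ)
          (R.adj₁.unit.app (pullback (R.jPush.map β) (R.adj₄.unit.app M))))
        ≅ kernel (R.adj₁.unit.app (pullback (R.jPush.map β) (R.adj₄.unit.app M))) :=
      kernelIsoOfEq (pullbackSymmetry_hom_comp_snd _ _).symm ≪≫ kernelIsIsoComp _ _ ≪≫
        kernelPullbackSndIso _ _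
    have hzK : IsZero (R.iStar.obj (kernel
        (R.adj₁.unit.app (pullback (R.jPush.map β) (R.adj₄.unit.app M))))) := by
      have hσu : R.adj₃.counit.app (pullback (R.jPush.map β) (R.adj₄.unit.app M)) ≫
          R.adj₁.unit.app (pullback (R.jPush.map β) (R.adj₄.unit.app M)) = 0 :=
        hom_jShriek_iIns_eq_zero R _
      haveI : IsIso (R.jStar.map
          (R.adj₃.counit.app (pullback (R.jPush.map β) (R.adj₄.unit.app M)))) := inferInstance
      have hzQ : IsZero (R.jStar.obj (cokernel
          (R.adj₃.counit.app (pullback (R.jPush.map β) (R.adj₄.unit.app M))))) :=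
        IsZero.of_iso (RecollementGluingAux.isZero_cokernel_of_epi _) (PreservesCokernel.iso R.jStar _)
      obtain ⟨A₀, ⟨eQ⟩⟩ := (R.ker_jStar _).mp hzQ
      have hfac : kernel.ι (R.adj₁.unit.app (pullback (R.jPush.map β) (R.adj₄.unit.app M))) ≫
          cokernel.π (R.adj₃.counit.app (pullback (R.jPush.map β) (R.adj₄.unit.app M))) = 0 := by
        have h5 : cokernel.π (R.adj₃.counit.app (pullback (R.jPush.map β) (R.adj₄.unit.app M)))
            ≫ eQ.hom = R.adj₁.unit.app (pullback (R.jPush.map β) (R.adj₄.unit.app M)) ≫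
            R.iIns.map ((R.adj₁.homEquiv _ A₀).symm
              (cokernel.π (R.adj₃.counit.app (pullback (R.jPush.map β) (R.adj₄.unit.app M)))
                ≫ eQ.hom)) := by
          conv_lhs => rw [← Equiv.apply_symm_apply (R.adj₁.homEquiv _ A₀)
            (cokernel.π (R.adj₃.counit.app (pullback (R.jPush.map β) (R.adj₄.unit.app M)))
              ≫ eQ.hom)]
          rw [Adjunction.homEquiv_unit]
          rfl
        have h6 : kernel.ι (R.adj₁.unit.app (pullback (R.jPush.map β) (R.adj₄.unit.app M))) ≫
            (cokernel.π (R.adj₃.counit.app (pullback (R.jPush.map β) (R.adj₄.unit.app M)))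
              ≫ eQ.hom) = 0 := by
          rw [h5, ← Category.assoc, kernel.condition, zero_comp]
        have h8 : (kernel.ι (R.adj₁.unit.app (pullback (R.jPush.map β) (R.adj₄.unit.app M))) ≫
            cokernel.π (R.adj₃.counit.app (pullback (R.jPush.map β) (R.adj₄.unit.app M)))) ≫
            eQ.hom = 0 ≫ eQ.hom := by
          rw [Category.assoc, h6, zero_comp]
        exact (cancel_mono eQ.hom).mp h8
      have hexS : (ShortComplex.mk
          (R.adj₃.counit.app (pullback (R.jPush.map β) (R.adj₄.unit.app M)))
          (cokernel.π (R.adj₃.counit.app (pullback (R.jPush.map β) (R.adj₄.unit.app M))))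
          (cokernel.condition _)).Exact :=
        ShortComplex.exact_of_g_is_cokernel _ (cokernelIsCokernel _)
      obtain ⟨Z', ρ, hρ, x₁, hfac2⟩ := hexS.exact_up_to_refinements
        (kernel.ι (R.adj₁.unit.app (pullback (R.jPush.map β) (R.adj₄.unit.app M)))) hfac
      have h9 : ρ = x₁ ≫ kernel.lift _
          (R.adj₃.counit.app (pullback (R.jPush.map β) (R.adj₄.unit.app M))) hσu := by
        apply (cancel_mono (kernel.ι
          (R.adj₁.unit.app (pullback (R.jPush.map β) (R.adj₄.unit.app M))))).mp
        rw [hfac2, Category.assoc, kernel.lift_ι]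
      haveI : Epi ρ := hρ
      haveI : Epi (kernel.lift _
          (R.adj₃.counit.app (pullback (R.jPush.map β) (R.adj₄.unit.app M))) hσu) :=
        epi_of_epi_fac h9.symm
      haveI : Epi (R.iStar.map (kernel.lift _
          (R.adj₃.counit.app (pullback (R.jPush.map β) (R.adj₄.unit.app M))) hσu)) :=
        preserves_epi_of_preservesColimit R.iStar _
      exact isZero_of_epi_zero (R.iStar.map (kernel.lift _
          (R.adj₃.counit.app (pullback (R.jPush.map β) (R.adj₄.unit.app M))) hσu))
        (isZero_iStar_jShriek R _)
    have hwfst : R.iStar.map (kernel.ι (pullback.fst (R.iIns.map δ)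
        (R.adj₁.unit.app (pullback (R.jPush.map β) (R.adj₄.unit.app M))))) ≫
        R.iStar.map (pullback.fst (R.iIns.map δ)
        (R.adj₁.unit.app (pullback (R.jPush.map β) (R.adj₄.unit.app M)))) = 0 := by
      rw [← R.iStar.map_comp, kernel.condition, R.iStar.map_zero]
    have hmapcolim : IsColimit (CokernelCofork.ofπ (R.iStar.map (pullback.fst (R.iIns.map δ)
        (R.adj₁.unit.app (pullback (R.jPush.map β) (R.adj₄.unit.app M))))) hwfst) :=
      CokernelCofork.mapIsColimit _ (cokernelCoforkOfEpi (pullback.fst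
        (R.iIns.map δ) (R.adj₁.unit.app (pullback (R.jPush.map β) (R.adj₄.unit.app M))))) R.iStar
    haveI : IsIso (R.iStar.map (pullback.fst (R.iIns.map δ)
        (R.adj₁.unit.app (pullback (R.jPush.map β) (R.adj₄.unit.app M))))) := by
      refine isIso_of_isColimit_cofork hmapcolim ?_
      exact (IsZero.of_iso hzK (R.iStar.mapIso ekK)).eq_of_src _ _
    have eTi : R.iStar.obj (pullback (R.iIns.map δ)
        (R.adj₁.unit.app (pullback (R.jPush.map β) (R.adj₄.unit.app M)))) ≅ t₁ :=
      asIso (R.iStar.map (pullback.fst (R.iIns.map δ)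
        (R.adj₁.unit.app (pullback (R.jPush.map β) (R.adj₄.unit.app M))))) ≪≫
        asIso (R.adj₁.counit.app t₁)
    haveI : Mono (R.jStar.map (pullback.snd (R.iIns.map δ)
        (R.adj₁.unit.app (pullback (R.jPush.map β) (R.adj₄.unit.app M))))) :=
      mono_of_isZero_kernel _ (IsZero.of_iso (isZero_jStar_iIns R f₁)
        ((PreservesKernel.iso R.jStar _).symm ≪≫ R.jStar.mapIso ekT))
    haveI : Epi (R.jStar.map (pullback.snd (R.iIns.map δ)
        (R.adj₁.unit.app (pullback (R.jPush.map β) (R.adj₄.unit.app M))))) :=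
      preserves_epi_of_preservesColimit R.jStar _
    haveI : IsIso (R.jStar.map (pullback.snd (R.iIns.map δ)
        (R.adj₁.unit.app (pullback (R.jPush.map β) (R.adj₄.unit.app M))))) :=
      isIso_of_mono_of_epi _
    have eTj : R.jStar.obj (pullback (R.iIns.map δ)
        (R.adj₁.unit.app (pullback (R.jPush.map β) (R.adj₄.unit.app M)))) ≅ t₂ :=
      asIso (R.jStar.map (pullback.snd (R.iIns.map δ)
        (R.adj₁.unit.app (pullback (R.jPush.map β) (R.adj₄.unit.app M))))) ≪≫ eGj
    haveI : Epi (pullback.snd (R.iIns.map δ)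
        (R.adj₁.unit.app (pullback (R.jPush.map β) (R.adj₄.unit.app M))) ≫
        pullback.snd (R.jPush.map β) (R.adj₄.unit.app M)) := epi_comp _ _
    haveI : Mono (R.iShriek.map (pullback.snd (R.jPush.map β) (R.adj₄.unit.app M))) :=
      mono_of_isZero_kernel _ (IsZero.of_iso (isZero_iShriek_jPush R f₂)
        ((PreservesKernel.iso R.iShriek _).symm ≪≫ R.iShriek.mapIso ekG))
    have eFi : R.iShriek.obj (kernel (pullback.snd (R.iIns.map δ)
        (R.adj₁.unit.app (pullback (R.jPush.map β) (R.adj₄.unit.app M))) ≫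
        pullback.snd (R.jPush.map β) (R.adj₄.unit.app M))) ≅ f₁ :=
      PreservesKernel.iso R.iShriek _ ≪≫ kernelIsoOfEq (R.iShriek.map_comp _ _) ≪≫
        kernelCompMono _ _ ≪≫ (PreservesKernel.iso R.iShriek _).symm ≪≫
        R.iShriek.mapIso ekT ≪≫ (asIso (R.adj₂.unit.app f₁)).symm
    have eFj : R.jStar.obj (kernel (pullback.snd (R.iIns.map δ)
        (R.adj₁.unit.app (pullback (R.jPush.map β) (R.adj₄.unit.app M))) ≫
        pullback.snd (R.jPush.map β) (R.adj₄.unit.app M))) ≅ f₂ :=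
      PreservesKernel.iso R.jStar _ ≪≫ kernelIsoOfEq (R.jStar.map_comp _ _) ≪≫
        kernelIsIsoComp _ _ ≪≫ (PreservesKernel.iso R.jStar _).symm ≪≫
        R.jStar.mapIso ekG ≪≫ asIso (R.adj₄.counit.app f₂)
    exact ⟨kernel (pullback.snd (R.iIns.map δ)
        (R.adj₁.unit.app (pullback (R.jPush.map β) (R.adj₄.unit.app M))) ≫
        pullback.snd (R.jPush.map β) (R.adj₄.unit.app M)),
      pullback (R.iIns.map δ) (R.adj₁.unit.app (pullback (R.jPush.map β) (R.adj₄.unit.app M))),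
      kernel.ι _,
      pullback.snd (R.iIns.map δ)
        (R.adj₁.unit.app (pullback (R.jPush.map β) (R.adj₄.unit.app M))) ≫
        pullback.snd (R.jPush.map β) (R.adj₄.unit.app M),
      kernel.condition _,
      ⟨h₁.isoClosed_F eFi.symm hf₁, h₂.isoClosed_F eFj.symm hf₂⟩,
      ⟨h₁.isoClosed_T eTi.symm ht₁, h₂.isoClosed_T eTj.symm ht₂⟩,
      shortExact_of_epi _⟩
  · -- special preenvelope: 0 ⟶ M ⟶ F ⟶ T ⟶ 0
    intro M
    obtain ⟨f₂, t₂, α, β, wC, hf₂, ht₂, hseC⟩ := h₂.exists_seq_right (R.jStar.obj M)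
    obtain ⟨wC', hseC'⟩ := hex₂ α β wC hseC
    haveI : Mono (R.jShriek.map α) := hseC'.mono_f
    haveI : Epi (R.jShriek.map β) := hseC'.epi_g
    haveI hma : Mono (pushout.inr (R.jShriek.map α) (R.adj₃.counit.app M)) := inferInstance
    haveI : IsIso (R.jStar.map (R.adj₃.counit.app M)) := inferInstance
    haveI : IsIso (pushout.inl (R.jStar.map (R.jShriek.map α))
        (R.jStar.map (R.adj₃.counit.app M))) := inferInstance
    have eF0 : f₂ ≅ R.jStar.obj (pushout (R.jShriek.map α) (R.adj₃.counit.app M)) :=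
      asIso (R.adj₃.unit.app f₂) ≪≫
        asIso (pushout.inl (R.jStar.map (R.jShriek.map α)) (R.jStar.map (R.adj₃.counit.app M))) ≪≫
        PreservesPushout.iso R.jStar _ _
    have ecoka : cokernel (pushout.inr (R.jShriek.map α) (R.adj₃.counit.app M))
        ≅ R.jShriek.obj t₂ := cokernelPushoutInrIso _ _ ≪≫ cokernelIsoOfShortExact hseC'
    obtain ⟨f₁, t₁, γ, δ, wA, hf₁, ht₁, hseA⟩ :=
      h₁.exists_seq_right (R.iShriek.obj (pushout (R.jShriek.map α) (R.adj₃.counit.app M)))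
    have hseA' : ((ShortComplex.mk γ δ wA).map R.iIns).ShortExact := hseA.map_of_exact R.iIns
    haveI : Mono (R.iIns.map γ) := hseA'.mono_f
    haveI : Mono (R.adj₂.counit.app (pushout (R.jShriek.map α) (R.adj₃.counit.app M))) :=
      mono_counit₂ R _
    haveI hmb : Mono (pushout.inr (R.iIns.map γ)
        (R.adj₂.counit.app (pushout (R.jShriek.map α) (R.adj₃.counit.app M)))) := inferInstance
    haveI hml : Mono (pushout.inl (R.iIns.map γ)
        (R.adj₂.counit.app (pushout (R.jShriek.map α) (R.adj₃.counit.app M)))) := inferInstance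
    have ecokb : cokernel (pushout.inr (R.iIns.map γ)
        (R.adj₂.counit.app (pushout (R.jShriek.map α) (R.adj₃.counit.app M))))
        ≅ R.iIns.obj t₁ := cokernelPushoutInrIso _ _ ≪≫ cokernelIsoOfShortExact hseA'
    obtain ⟨wb, hb⟩ := hex₁ (pushout.inl (R.iIns.map γ)
        (R.adj₂.counit.app (pushout (R.jShriek.map α) (R.adj₃.counit.app M))))
      (cokernel.π _) (cokernel.condition _) (shortExact_of_mono _)
    obtain ⟨wε, hε⟩ := hex₁ (R.adj₂.counit.app (pushout (R.jShriek.map α) (R.adj₃.counit.app M)))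
      (cokernel.π _) (cokernel.condition _) (shortExact_of_mono _)
    haveI : IsIso (R.iShriek.map
        (R.adj₂.counit.app (pushout (R.jShriek.map α) (R.adj₃.counit.app M)))) := inferInstance
    have hz3 : IsZero (R.iShriek.obj (cokernel
        (R.adj₂.counit.app (pushout (R.jShriek.map α) (R.adj₃.counit.app M))))) :=
      isZero_X₃_of_shortExact_of_epi_f hε (by infer_instance)
    haveI : IsIso (R.iShriek.map (pushout.inl (R.iIns.map γ)
        (R.adj₂.counit.app (pushout (R.jShriek.map α) (R.adj₃.counit.app M))))) :=
      hb.isIso_f_iff.mpr (IsZero.of_iso hz3 (R.iShriek.mapIso (cokernelPushoutInlIso _ _)))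
    have eFi : R.iShriek.obj (pushout (R.iIns.map γ)
        (R.adj₂.counit.app (pushout (R.jShriek.map α) (R.adj₃.counit.app M)))) ≅ f₁ :=
      (asIso (R.iShriek.map (pushout.inl (R.iIns.map γ)
        (R.adj₂.counit.app (pushout (R.jShriek.map α) (R.adj₃.counit.app M)))))).symm ≪≫
        (asIso (R.adj₂.unit.app f₁)).symm
    haveI : Mono (R.jStar.map (pushout.inr (R.iIns.map γ)
        (R.adj₂.counit.app (pushout (R.jShriek.map α) (R.adj₃.counit.app M))))) :=
      preserves_mono_of_preservesLimit _ _
    haveI : Epi (R.jStar.map (pushout.inr (R.iIns.map γ)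
        (R.adj₂.counit.app (pushout (R.jShriek.map α) (R.adj₃.counit.app M))))) :=
      epi_of_isZero_cokernel _ (IsZero.of_iso (isZero_jStar_iIns R t₁)
        ((PreservesCokernel.iso R.jStar _).symm ≪≫ R.jStar.mapIso ecokb))
    haveI : IsIso (R.jStar.map (pushout.inr (R.iIns.map γ)
        (R.adj₂.counit.app (pushout (R.jShriek.map α) (R.adj₃.counit.app M))))) :=
      isIso_of_mono_of_epi _
    have eFj : R.jStar.obj (pushout (R.iIns.map γ)
        (R.adj₂.counit.app (pushout (R.jShriek.map α) (R.adj₃.counit.app M)))) ≅ f₂ :=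
      (asIso (R.jStar.map (pushout.inr (R.iIns.map γ)
        (R.adj₂.counit.app (pushout (R.jShriek.map α) (R.adj₃.counit.app M)))))).symm ≪≫
        eF0.symm
    haveI : Mono (pushout.inr (R.jShriek.map α) (R.adj₃.counit.app M) ≫
        pushout.inr (R.iIns.map γ)
        (R.adj₂.counit.app (pushout (R.jShriek.map α) (R.adj₃.counit.app M)))) := mono_comp _ _
    haveI hepia : Epi (R.iStar.map (pushout.inr (R.jShriek.map α) (R.adj₃.counit.app M))) :=
      epi_of_isZero_cokernel _ (IsZero.of_iso (isZero_iStar_jShriek R t₂)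
        ((PreservesCokernel.iso R.iStar _).symm ≪≫ R.iStar.mapIso ecoka))
    have eTi : R.iStar.obj (cokernel (pushout.inr (R.jShriek.map α) (R.adj₃.counit.app M) ≫
        pushout.inr (R.iIns.map γ)
        (R.adj₂.counit.app (pushout (R.jShriek.map α) (R.adj₃.counit.app M))))) ≅ t₁ :=
      PreservesCokernel.iso R.iStar _ ≪≫ cokernelIsoOfEq (R.iStar.map_comp _ _) ≪≫
        cokernelEpiComp _ _ ≪≫ (PreservesCokernel.iso R.iStar _).symm ≪≫
        R.iStar.mapIso ecokb ≪≫ asIso (R.adj₁.counit.app t₁)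
    have eTj : R.jStar.obj (cokernel (pushout.inr (R.jShriek.map α) (R.adj₃.counit.app M) ≫
        pushout.inr (R.iIns.map γ)
        (R.adj₂.counit.app (pushout (R.jShriek.map α) (R.adj₃.counit.app M))))) ≅ t₂ :=
      PreservesCokernel.iso R.jStar _ ≪≫ cokernelIsoOfEq (R.jStar.map_comp _ _) ≪≫
        cokernelCompIsIso _ _ ≪≫ (PreservesCokernel.iso R.jStar _).symm ≪≫
        R.jStar.mapIso ecoka ≪≫ (asIso (R.adj₃.unit.app t₂)).symm
    exact ⟨pushout (R.iIns.map γ)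
        (R.adj₂.counit.app (pushout (R.jShriek.map α) (R.adj₃.counit.app M))),
      cokernel (pushout.inr (R.jShriek.map α) (R.adj₃.counit.app M) ≫
        pushout.inr (R.iIns.map γ)
        (R.adj₂.counit.app (pushout (R.jShriek.map α) (R.adj₃.counit.app M)))),
      pushout.inr (R.jShriek.map α) (R.adj₃.counit.app M) ≫ pushout.inr (R.iIns.map γ)
        (R.adj₂.counit.app (pushout (R.jShriek.map α) (R.adj₃.counit.app M))),
      cokernel.π _, cokernel.condition _,
      ⟨h₁.isoClosed_F eFi.symm hf₁, h₂.isoClosed_F eFj.symm hf₂⟩,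
      ⟨h₁.isoClosed_T eTi.symm ht₁, h₂.isoClosed_T eTj.symm ht₂⟩,
      shortExact_of_mono _⟩
end
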